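/- arXiv:1608.01423 — 5 statements merged into one kernel-verified Lean document; each statement's English description precedes it below -/
import Mathlib

section
/- Let q be a prime power, and let 0 ≤ m ≤ n be integers. The number of m × n matrices over the finite field F_q that are in reduced row-echelon form and have rank m equals the Gaussian binomial coefficient [[n, m]]_q = ∏_{i=1}^{m} (q^{n−i+1} − 1)/(q^{i} − 1). -/
/-!
Induct on the last column. In a rank-`(m + 1)` RREF matrix of size `(m + 1) × (n + 1)` either
the last column is the pivot column of the last row, and deleting the last row and column leaves
an arbitrary rank-`m` RREF `m × n` matrix, or no pivot lies in the last column, which is then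
arbitrary, and deleting it leaves an arbitrary rank-`(m + 1)` RREF `(m + 1) × n` matrix. So the
counts satisfy `N(m+1, n+1) = N(m, n) + q ^ (m + 1) * N(m+1, n)`, the `q`-Pascal rule of the
Gaussian binomials. An RREF matrix has full row rank iff it has no zero row: the pivot columns
of its rows then form an identity submatrix.
-/

/-- A matrix is in reduced row-echelon form: zero rows lie below nonzero rows; the
leading (first nonzero) entry of every nonzero row is `1` and is the only nonzero
entry in its column; and the leading entries occur in strictly increasing column
positions from top to bottom. -/
def IsRREF {K : Type} [Field K] {m n : ℕ} (M : Matrix (Fin m) (Fin n) K) : Prop :=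
  (∀ i i' : Fin m, i ≤ i' → (∀ j, M i j = 0) → ∀ j, M i' j = 0) ∧
  (∀ (i : Fin m) (j : Fin n), M i j ≠ 0 → (∀ j' : Fin n, j' < j → M i j' = 0) →
      M i j = 1 ∧ ∀ i' : Fin m, i' ≠ i → M i' j = 0) ∧
  (∀ (i i' : Fin m) (j j' : Fin n), i < i' →
      M i j ≠ 0 → (∀ l : Fin n, l < j → M i l = 0) →
      M i' j' ≠ 0 → (∀ l : Fin n, l < j' → M i' l = 0) → j < j')

open Finset Fin Matrix

theorem Fin.forall_lt_castSucc_iff {n : ℕ} {P : Fin (n + 1) → Prop} {j : Fin n} :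
    (∀ l < j.castSucc, P l) ↔ ∀ l < j, P l.castSucc := by
  refine ⟨fun h l hl => h _ (castSucc_lt_castSucc_iff.2 hl), fun h l hl => ?_⟩
  obtain ⟨l, rfl⟩ := exists_castSucc_eq.2 (ne_last_of_lt (hl.trans (castSucc_lt_last j)))
  exact h l (castSucc_lt_castSucc_iff.1 hl)

namespace Matrix

variable {R : Type*} {ι : Type*} {m n : ℕ}

def appendCol (M : Matrix ι (Fin n) R) (v : ι → R) : Matrix ι (Fin (n + 1)) R :=
  of fun i => Fin.snoc (M i) (v i)

def appendRow (M : Matrix (Fin m) ι R) (r : ι → R) : Matrix (Fin (m + 1)) ι R :=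
  of (Fin.snoc (α := fun _ => ι → R) M r)

@[simp] theorem appendCol_castSucc (M : Matrix ι (Fin n) R) (v : ι → R) (i : ι) (j : Fin n) :
    appendCol M v i j.castSucc = M i j := by
  simp [appendCol]

@[simp] theorem appendCol_last (M : Matrix ι (Fin n) R) (v : ι → R) (i : ι) :
    appendCol M v i (last n) = v i := by
  simp [appendCol]

@[simp] theorem submatrix_appendCol (M : Matrix ι (Fin n) R) (v : ι → R) :
    (appendCol M v).submatrix id castSucc = M := by
  ext
  simp

@[simp] theorem appendRow_castSucc (M : Matrix (Fin m) ι R) (r : ι → R) (i : Fin m) :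
    appendRow M r i.castSucc = M i :=
  Fin.snoc_castSucc (α := fun _ => ι → R) ..

@[simp] theorem appendRow_last (M : Matrix (Fin m) ι R) (r : ι → R) :
    appendRow M r (last m) = r :=
  Fin.snoc_last (α := fun _ => ι → R) ..

def appendColEquiv : Matrix ι (Fin n) R × (ι → R) ≃ Matrix ι (Fin (n + 1)) R where
  toFun x := appendCol x.1 x.2
  invFun M := (M.submatrix id castSucc, fun i => M i (last n))
  left_inv x := by ext <;> simp
  right_inv M := by
    ext i j
    induction j using Fin.lastCases <;> simp

section Zero

variable [Zero R]

theorem isLeadingEntry_submatrix_castSucc_iff {M : Matrix ι (Fin (n + 1)) R} {i : ι}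
    {j : Fin n} :
    (M.submatrix id castSucc).IsLeadingEntry i j ↔ M.IsLeadingEntry i j.castSucc := by
  simp only [IsLeadingEntry, submatrix_apply, id, forall_lt_castSucc_iff]

theorem IsLeadingEntry.submatrix_castSucc_eq_zero {M : Matrix ι (Fin (n + 1)) R} {i : ι}
    (h : M.IsLeadingEntry i (last n)) : (M.submatrix id castSucc) i = 0 :=
  funext fun j => h.1 _ (castSucc_lt_last j)

end Zero

section ReducedRowEchelon

variable [Zero R] [One R]

structure IsFullRowRankRREF (M : Matrix (Fin m) (Fin n) R) : Prop
    extends M.IsReducedRowEchelon where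
  row_ne_zero (i : Fin m) : M i ≠ 0

theorem IsFullRowRankRREF.submatrix_rows {k : ℕ} {M : Matrix (Fin m) (Fin n) R}
    (h : M.IsFullRowRankRREF) {f : Fin k → Fin m} (hf : StrictMono f) :
    (M.submatrix f id).IsFullRowRankRREF :=
  ⟨⟨fun _ _ hlt _ hz => h.isRowEchelon (hf hlt) hz, fun _ _ hc => h.eq_one hc,
    fun _ _ _ hlt hc => h.eq_zero (hf hlt) hc⟩, fun i => h.row_ne_zero (f i)⟩

theorem IsFullRowRankRREF.eq_last_of_isLeadingEntry_last
    {M : Matrix (Fin (m + 1)) (Fin (n + 1)) R} (h : M.IsFullRowRankRREF) {i : Fin (m + 1)}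
    (hi : M.IsLeadingEntry i (last n)) : i = last m := by
  by_contra hne
  exact h.row_ne_zero (last m) <| funext fun j =>
    h.isRowEchelon (lt_last_iff_ne_last.2 hne) fun l hl => hi.1 l (hl.trans_le (le_last j))

theorem isFullRowRankRREF_submatrix_castSucc_iff (M : Matrix (Fin m) (Fin (n + 1)) R) :
    (M.submatrix id castSucc).IsFullRowRankRREF ↔
      M.IsFullRowRankRREF ∧ ∀ i, ¬M.IsLeadingEntry i (last n) := by
  constructor
  · intro h
    have not_last : ∀ i, ¬M.IsLeadingEntry i (last n) := fun i hi =>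
      h.row_ne_zero i hi.submatrix_castSucc_eq_zero
    have castSucc_of_lead : ∀ {i c}, M.IsLeadingEntry i c → ∃ c' : Fin n, c'.castSucc = c :=
      fun {i c} hc => exists_castSucc_eq.2 fun he => not_last i (he ▸ hc)
    refine ⟨⟨⟨fun i₁ i₂ hlt j hz => ?_, fun i c hc => ?_, fun i₁ i₂ c hlt hc => ?_⟩,
      fun i hi => h.row_ne_zero i (funext fun j => congrFun hi j.castSucc)⟩, not_last⟩
    · induction j using Fin.lastCases with
      | last => exact absurd (funext fun j => hz _ (castSucc_lt_last j)) (h.row_ne_zero i₁)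
      | cast j => exact h.isRowEchelon hlt (forall_lt_castSucc_iff.1 hz)
    · obtain ⟨c, rfl⟩ := castSucc_of_lead hc
      exact h.eq_one (isLeadingEntry_submatrix_castSucc_iff.2 hc)
    · obtain ⟨c, rfl⟩ := castSucc_of_lead hc
      exact h.eq_zero hlt (isLeadingEntry_submatrix_castSucc_iff.2 hc)
  · rintro ⟨h, not_last⟩
    refine ⟨⟨fun i₁ i₂ hlt j hz => h.isRowEchelon hlt (forall_lt_castSucc_iff.2 hz),
      fun i c hc => h.eq_one (isLeadingEntry_submatrix_castSucc_iff.1 hc),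
      fun i₁ i₂ c hlt hc => h.eq_zero hlt (isLeadingEntry_submatrix_castSucc_iff.1 hc)⟩,
      fun i hi => ?_⟩
    obtain ⟨c, hc⟩ := row_ne_zero_iff_exists_isLeadingEntry.1 (h.row_ne_zero i)
    obtain ⟨c, rfl⟩ := exists_castSucc_eq.2 fun he => not_last i (he ▸ hc)
    exact hc.2 (congrFun hi c)

theorem IsFullRowRankRREF.submatrix_castSucc_castSucc
    {M : Matrix (Fin (m + 1)) (Fin (n + 1)) R} (h : M.IsFullRowRankRREF) :
    (M.submatrix castSucc castSucc).IsFullRowRankRREF :=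
  ((isFullRowRankRREF_submatrix_castSucc_iff (M.submatrix castSucc id)).2
    ⟨h.submatrix_rows strictMono_castSucc, fun i hi =>
      (castSucc_lt_last i).ne (h.eq_last_of_isLeadingEntry_last hi)⟩)

theorem IsFullRowRankRREF.appendRow_appendCol_submatrix
    {M : Matrix (Fin (m + 1)) (Fin (n + 1)) R} (h : M.IsFullRowRankRREF)
    (hl : M.IsLeadingEntry (last m) (last n)) :
    appendRow (appendCol (M.submatrix castSucc castSucc) 0) (Pi.single (last n) 1) = M := by
  ext i j
  induction i using Fin.lastCases with
  | last =>
    induction j using Fin.lastCases with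
    | last => simp [h.eq_one hl]
    | cast j => simp [hl.1 _ (castSucc_lt_last j)]
  | cast i =>
    induction j using Fin.lastCases with
    | last => simpa using (h.eq_zero (castSucc_lt_last i) hl).symm
    | cast j => simp

variable [NeZero (1 : R)]

theorem isLeadingEntry_appendRow_single_last (M : Matrix (Fin m) (Fin (n + 1)) R) :
    (appendRow M (Pi.single (last n) 1)).IsLeadingEntry (last m) (last n) :=
  ⟨fun j hj => by simp [Pi.single_eq_of_ne hj.ne], by simp⟩

theorem IsFullRowRankRREF.appendRow_single_last {M : Matrix (Fin m) (Fin (n + 1)) R}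
    (h : M.IsFullRowRankRREF) (h0 : ∀ i, M i (last n) = 0) :
    (appendRow M (Pi.single (last n) 1)).IsFullRowRankRREF := by
  set N := appendRow M (Pi.single (last n) 1)
  have lead_castSucc : ∀ {i c}, N.IsLeadingEntry i.castSucc c ↔ M.IsLeadingEntry i c := by
    simp [N, IsLeadingEntry]
  have lead_last : ∀ {c}, N.IsLeadingEntry (last m) c → c = last n := fun hc =>
    hc.unique (isLeadingEntry_appendRow_single_last M)
  refine ⟨⟨fun i₁ i₂ hlt j hz => ?_, fun i c hc => ?_, fun i₁ i₂ c hlt hc => ?_⟩, fun i => ?_⟩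
  · obtain ⟨i₁, rfl⟩ := exists_castSucc_eq.2 (ne_last_of_lt hlt)
    simp only [N, appendRow_castSucc] at hz
    induction i₂ using Fin.lastCases with
    | last =>
      rcases eq_or_ne j (last n) with rfl | hj
      · refine absurd (funext fun j => ?_) (h.row_ne_zero i₁)
        induction j using Fin.lastCases with
        | last => exact h0 i₁
        | cast j => exact hz _ (castSucc_lt_last j)
      · simp [N, Pi.single_eq_of_ne hj]
    | cast i₂ => simpa [N] using h.isRowEchelon (castSucc_lt_castSucc_iff.1 hlt) hz
  · induction i using Fin.lastCases with
    | last => simp [N, lead_last hc]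
    | cast i => simpa [N] using h.eq_one (lead_castSucc.1 hc)
  · obtain ⟨i₁, rfl⟩ := exists_castSucc_eq.2 (ne_last_of_lt hlt)
    induction i₂ using Fin.lastCases with
    | last => simp [N, lead_last hc, h0 i₁]
    | cast i₂ =>
      simpa [N] using h.eq_zero (castSucc_lt_castSucc_iff.1 hlt) (lead_castSucc.1 hc)
  · induction i using Fin.lastCases with
    | last => simp [N]
    | cast i => simpa [N] using h.row_ne_zero i

end ReducedRowEchelon

section Rank

variable [CommSemiring R] [StrongRankCondition R]

theorem rank_lt_card_height_of_row_eq_zero {κ : Type*} [Fintype ι] [Fintype κ]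
    {M : Matrix ι κ R} {i : ι} (h : M i = 0) : M.rank < Fintype.card ι := by
  classical
  calc M.rank ≤ (univ.erase i).card :=
        M.rank_le_card_of_support_subset _ fun k hk =>
          mem_erase.2 ⟨fun hki => hk (hki ▸ h), mem_univ k⟩
    _ < Fintype.card ι := card_erase_lt_of_mem (mem_univ i)

theorem IsFullRowRankRREF.rank_eq {M : Matrix (Fin m) (Fin n) R} (h : M.IsFullRowRankRREF) :
    M.rank = m := by
  choose p hp using fun i => row_ne_zero_iff_exists_isLeadingEntry.1 (h.row_ne_zero i)
  have hid : M.submatrix id p = 1 := by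
    ext i k
    rcases eq_or_ne i k with rfl | hne
    · simp [h.eq_one (hp i)]
    · simp [hne, h.eq_zero_of_ne_of_isLeadingEntry hne (hp k)]
  refine le_antisymm (rank_le_height M) ?_
  calc m = (M.submatrix id p).rank := by rw [hid, rank_one, Fintype.card_fin]
    _ ≤ M.rank := rank_submatrix_le M id p

end Rank

section Count

variable [Zero R] [One R]

def fullRowRankRREFLastPivotEquiv [NeZero (1 : R)] :
    {M : Matrix (Fin (m + 1)) (Fin (n + 1)) R //
        M.IsFullRowRankRREF ∧ M.IsLeadingEntry (last m) (last n)} ≃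
      {A : Matrix (Fin m) (Fin n) R // A.IsFullRowRankRREF} where
  toFun M := ⟨M.1.submatrix castSucc castSucc, M.2.1.submatrix_castSucc_castSucc⟩
  invFun A := ⟨appendRow (appendCol A.1 0) (Pi.single (last n) 1),
    ((isFullRowRankRREF_submatrix_castSucc_iff (appendCol A.1 0)).1 (by simpa using A.2)).1
      |>.appendRow_single_last fun i => appendCol_last _ _ i,
    isLeadingEntry_appendRow_single_last _⟩
  left_inv M := Subtype.ext (M.2.1.appendRow_appendCol_submatrix M.2.2)
  right_inv A := Subtype.ext (by ext; simp)

def fullRowRankRREFNoLastPivotEquiv :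
    {M : Matrix (Fin (m + 1)) (Fin (n + 1)) R //
        M.IsFullRowRankRREF ∧ ¬M.IsLeadingEntry (last m) (last n)} ≃
      {B : Matrix (Fin (m + 1)) (Fin n) R // B.IsFullRowRankRREF} × (Fin (m + 1) → R) :=
  (appendColEquiv.symm.subtypeEquiv fun M => by
    rw [appendColEquiv, Equiv.coe_fn_symm_mk, isFullRowRankRREF_submatrix_castSucc_iff]
    exact and_congr_right fun h =>
      ⟨fun hl i hi => hl (h.eq_last_of_isLeadingEntry_last hi ▸ hi), fun hno => hno _⟩).trans
    Equiv.prodSubtypeFstEquivSubtypeProd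

theorem card_fullRowRankRREF_zero_rows :
    Nat.card {M : Matrix (Fin 0) (Fin n) R // M.IsFullRowRankRREF} = 1 :=
  Nat.card_eq_one_iff_unique.2
    ⟨⟨fun _ _ => Subtype.ext (ext nofun)⟩, ⟨⟨0, ⟨nofun, nofun, nofun⟩, nofun⟩⟩⟩

theorem card_fullRowRankRREF_zero_cols :
    Nat.card {M : Matrix (Fin (m + 1)) (Fin 0) R // M.IsFullRowRankRREF} = 0 :=
  have : IsEmpty {M : Matrix (Fin (m + 1)) (Fin 0) R // M.IsFullRowRankRREF} :=
    ⟨fun M => M.2.row_ne_zero 0 (funext nofun)⟩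
  Nat.card_of_isEmpty

theorem card_fullRowRankRREF_succ_succ [NeZero (1 : R)] [Finite R] :
    Nat.card {M : Matrix (Fin (m + 1)) (Fin (n + 1)) R // M.IsFullRowRankRREF} =
      Nat.card {A : Matrix (Fin m) (Fin n) R // A.IsFullRowRankRREF} +
        Nat.card R ^ (m + 1) *
          Nat.card {B : Matrix (Fin (m + 1)) (Fin n) R // B.IsFullRowRankRREF} := by
  classical
  let P (M : {M : Matrix (Fin (m + 1)) (Fin (n + 1)) R // M.IsFullRowRankRREF}) : Prop :=
    M.1.IsLeadingEntry (last m) (last n)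
  rw [← Nat.card_congr (Equiv.sumCompl P), Nat.card_sum,
    Nat.card_congr ((Equiv.subtypeSubtypeEquivSubtypeInter _ _).trans
      fullRowRankRREFLastPivotEquiv),
    Nat.card_congr ((Equiv.subtypeSubtypeEquivSubtypeInter _ _).trans
      fullRowRankRREFNoLastPivotEquiv),
    Nat.card_prod, Nat.card_fun, Nat.card_fin, mul_comm]

end Count

end Matrix

/-- For `m > n` the factor `i = n` is `q ^ 0 - 1 = 0` (truncated subtraction), so the value
is `0`. -/
def gaussianBinomial (q : ℚ) (n m : ℕ) : ℚ :=
  ∏ i ∈ range m, (q ^ (n - i) - 1) / (q ^ (i + 1) - 1)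

@[simp] theorem gaussianBinomial_zero_right (q : ℚ) (n : ℕ) : gaussianBinomial q n 0 = 1 := by
  simp [gaussianBinomial]

theorem gaussianBinomial_eq_zero_of_lt (q : ℚ) {n m : ℕ} (h : n < m) :
    gaussianBinomial q n m = 0 :=
  prod_eq_zero (mem_range.2 h) (by simp)

theorem gaussianBinomial_succ_succ {q : ℚ} (hq : 1 < q) (n m : ℕ) :
    gaussianBinomial q (n + 1) (m + 1) =
      gaussianBinomial q n m + q ^ (m + 1) * gaussianBinomial q n (m + 1) := by
  rcases lt_or_ge n m with hnm | hmn
  · simp [gaussianBinomial_eq_zero_of_lt q hnm,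
      gaussianBinomial_eq_zero_of_lt q (Nat.succ_lt_succ hnm),
      gaussianBinomial_eq_zero_of_lt q (hnm.trans m.lt_succ_self)]
  obtain ⟨k, rfl⟩ := Nat.exists_eq_add_of_le hmn
  have hden : ∀ j, q ^ (j + 1) - 1 ≠ 0 := fun j =>
    (sub_pos.2 (one_lt_pow₀ hq j.succ_ne_zero)).ne'
  have hD : ∏ i ∈ range m, (q ^ (i + 1) - 1) ≠ 0 := prod_ne_zero_iff.2 fun j _ => hden j
  rw [gaussianBinomial, gaussianBinomial, gaussianBinomial, prod_div_distrib, prod_div_distrib,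
    prod_div_distrib, prod_range_succ' (fun i => q ^ (m + k + 1 - i) - 1),
    prod_range_succ (fun i => q ^ (m + k - i) - 1), prod_range_succ (fun i => q ^ (i + 1) - 1)]
  simp only [Nat.add_sub_add_right, Nat.add_sub_cancel_left, Nat.sub_zero]
  field_simp [hden m]
  ring

theorem Matrix.natCast_card_fullRowRankRREF {R : Type*} [Zero R] [One R] [NeZero (1 : R)]
    [Finite R] (n m : ℕ) :
    (Nat.card {M : Matrix (Fin m) (Fin n) R // M.IsFullRowRankRREF} : ℚ) =
      gaussianBinomial (Nat.card R) n m := by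
  have : Nontrivial R := ⟨⟨0, 1, zero_ne_one⟩⟩
  have hq : (1 : ℚ) < Nat.card R := by exact_mod_cast Finite.one_lt_card
  induction n generalizing m with
  | zero =>
    cases m with
    | zero => simp [card_fullRowRankRREF_zero_rows]
    | succ m => simp [card_fullRowRankRREF_zero_cols, gaussianBinomial_eq_zero_of_lt]
  | succ n ih =>
    cases m with
    | zero => simp [card_fullRowRankRREF_zero_rows]
    | succ m =>
      rw [card_fullRowRankRREF_succ_succ, gaussianBinomial_succ_succ hq]
      push_cast
      rw [ih, ih]

theorem isRREF_iff_isReducedRowEchelon {K : Type} [Field K] {m n : ℕ}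
    (M : Matrix (Fin m) (Fin n) K) :
    IsRREF M ↔ M.IsReducedRowEchelon := by
  constructor
  · rintro ⟨zero_rows, pivot, pivot_lt⟩
    refine ⟨fun i₁ i₂ hlt j hz => ?_, fun i c hc => (pivot i c hc.2 hc.1).1,
      fun i₁ i₂ c hlt hc => (pivot i₂ c hc.2 hc.1).2 i₁ hlt.ne⟩
    by_contra hne
    obtain ⟨c₂, hc₂⟩ := row_ne_zero_iff_exists_isLeadingEntry.1 fun h => hne (congrFun h j)
    have hc₂j : c₂ ≤ j := not_lt.1 fun hlt' => hne (hc₂.1 j hlt')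
    by_cases hrow : M i₁ = 0
    · exact hc₂.2 (zero_rows i₁ i₂ hlt.le (congrFun hrow) c₂)
    obtain ⟨c₁, hc₁⟩ := row_ne_zero_iff_exists_isLeadingEntry.1 hrow
    have hjc₁ : j ≤ c₁ := not_lt.1 fun hlt' => hc₁.2 (hz c₁ hlt')
    exact (pivot_lt i₁ i₂ c₁ c₂ hlt hc₁.2 hc₁.1 hc₂.2 hc₂.1).not_ge (hc₂j.trans hjc₁)
  · intro h
    refine ⟨fun i i' hle hz j => ?_, fun i j hj hpre =>
      ⟨h.eq_one ⟨hpre, hj⟩, fun i' hi' => h.eq_zero_of_ne_of_isLeadingEntry hi' ⟨hpre, hj⟩⟩,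
      fun i i' j j' hlt hj hpre hj' hpre' => not_le.1 fun hle =>
        hj' (h.isRowEchelon hlt fun l hl => hpre l (hl.trans_le hle))⟩
    rcases hle.eq_or_lt with rfl | hlt
    · exact hz j
    · exact congrFun (h.isRowEchelon.row_eq_zero_of_lt hlt (funext hz)) j

theorem isRREF_and_rank_eq_iff {K : Type} [Field K] {m n : ℕ} (M : Matrix (Fin m) (Fin n) K) :
    IsRREF M ∧ M.rank = m ↔ M.IsFullRowRankRREF := by
  rw [isRREF_iff_isReducedRowEchelon]
  refine ⟨fun ⟨h, hrank⟩ => ⟨h, fun i hi => ?_⟩, fun h => ⟨h.toIsReducedRowEchelon, h.rank_eq⟩⟩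
  simpa [hrank] using rank_lt_card_height_of_row_eq_zero hi

theorem card_rref_rank_eq_gaussian_general (q m n : ℕ)
    (K : Type) [Field K] [Fintype K] (hK : Fintype.card K = q) :
    ({M : Matrix (Fin m) (Fin n) K | IsRREF M ∧ M.rank = m}.ncard : ℚ) =
      ∏ i ∈ Finset.range m, ((q : ℚ) ^ (n - i) - 1) / ((q : ℚ) ^ (i + 1) - 1) := by
  have hset : {M : Matrix (Fin m) (Fin n) K | IsRREF M ∧ M.rank = m} =
      {M | M.IsFullRowRankRREF} :=
    Set.ext isRREF_and_rank_eq_iff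
  rw [hset, ← Nat.card_coe_set_eq, ← hK, ← Nat.card_eq_fintype_card]
  exact natCast_card_fullRowRankRREF n m

theorem card_rref_rank_eq_gaussian (q m n : ℕ)
    (hq : ∃ p r : ℕ, p.Prime ∧ 0 < r ∧ q = p ^ r) (hmn : m ≤ n)
    (K : Type) [Field K] [Fintype K] (hK : Fintype.card K = q) :
    ({M : Matrix (Fin m) (Fin n) K | IsRREF M ∧ M.rank = m}.ncard : ℚ) =
      ∏ i ∈ Finset.range m, ((q : ℚ) ^ (n - i) - 1) / ((q : ℚ) ^ (i + 1) - 1) :=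
  card_rref_rank_eq_gaussian_general q m n K hK
end

section
/- Let n ≥ 2 and let A = (a_{i,j}) and T = (t_{i,j}) be elements of Θ⁺_Δ(n) such that a_{i,j} ≥ t_{i−1,j} for all integers i < j. Then Σ_{i=1}^{n} Σ_{(l,j)∈ℤ², i<l<j} ( a_{i,j} t_{i,l} − t_{i,j} t_{i+1,l} ) ≥ 0. -/
/-- The set `Θ⁺_Δ(n)` of ℕ-valued ℤ×ℤ matrices which are `n`-periodic along the
diagonal, supported on entries `(i,j)` with `i < j`, and with finitely many nonzero
entries in each row. -/
structure ThetaPlus (n : ℕ) where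
  a : ℤ → ℤ → ℕ
  periodic : ∀ i j : ℤ, a i j = a (i + n) (j + n)
  upper : ∀ i j : ℤ, ¬i < j → a i j = 0
  rowFinite : ∀ i : ℤ, (Function.support (a i)).Finite

/-! Write `M i = ∑_{i < l < j} t_{i-1,j} t_{i,l}`. The hypothesis `a_{i,j} ≥ t_{i-1,j}` bounds
the positive part of the `i`-th summand below by `M i`, and since `t_{i+1,i+1} = 0` the negative
part is exactly `M (i + 1)`. Hence the sum is at least
`∑_{i=1}^n (M i - M (i + 1)) = M 1 - M (n + 1)`, which vanishes because `M` is `n`-periodic. -/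

open Function Finset

noncomputable def crossSum (i : ℤ) (u v : ℤ → ℕ) : ℤ :=
  ∑ᶠ p : ℤ × ℤ, if i < p.1 ∧ p.1 < p.2 then (u p.2 : ℤ) * v p.1 else 0

lemma hasFiniteSupport_crossSummand (i : ℤ) {u v : ℤ → ℕ} (hu : (support u).Finite)
    (hv : (support v).Finite) :
    HasFiniteSupport fun p : ℤ × ℤ =>
      if i < p.1 ∧ p.1 < p.2 then (u p.2 : ℤ) * v p.1 else 0 := by
  refine (hv.prod hu).subset fun p hp => ?_
  by_cases hc : i < p.1 ∧ p.1 < p.2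
  · simp only [mem_support, hc, and_self, if_true, ne_eq, mul_eq_zero, Nat.cast_eq_zero,
      not_or] at hp
    exact ⟨hp.2, hp.1⟩
  · simp [hc] at hp

lemma finsum_ite_sub_eq_crossSum_sub (i : ℤ) {u v u' v' : ℤ → ℕ} (hu : (support u).Finite)
    (hv : (support v).Finite) (hu' : (support u').Finite) (hv' : (support v').Finite) :
    ∑ᶠ p : ℤ × ℤ, (if i < p.1 ∧ p.1 < p.2 then
        (u p.2 : ℤ) * v p.1 - (u' p.2 : ℤ) * v' p.1 else 0) =
      crossSum i u v - crossSum i u' v' := by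
  rw [crossSum, crossSum, ← finsum_sub_distrib (hasFiniteSupport_crossSummand i hu hv)
    (hasFiniteSupport_crossSummand i hu' hv')]
  exact finsum_congr fun p => by split_ifs <;> simp

lemma crossSum_mono_left (i : ℤ) {u u' v : ℤ → ℕ} (hu : (support u).Finite)
    (hu' : (support u').Finite) (hv : (support v).Finite) (h : ∀ j, i < j → u j ≤ u' j) :
    crossSum i u v ≤ crossSum i u' v := by
  refine finsum_le_finsum' (hasFiniteSupport_crossSummand i hu hv)
    (hasFiniteSupport_crossSummand i hu' hv) fun p => ?_
  dsimp only
  split_ifs with hc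
  · exact mul_le_mul_of_nonneg_right (by exact_mod_cast h _ (hc.1.trans hc.2)) (by positivity)
  · exact le_rfl

lemma crossSum_succ_of_eq_zero {i : ℤ} (u : ℤ → ℕ) {v : ℤ → ℕ} (hv : v (i + 1) = 0) :
    crossSum (i + 1) u v = crossSum i u v := by
  refine finsum_congr fun p => ?_
  by_cases hp : p.1 = i + 1
  · simp [hp, hv]
  · exact if_congr (by omega) rfl rfl

lemma crossSum_add (i k : ℤ) (u v : ℤ → ℕ) :
    crossSum (i + k) u v = crossSum i (fun j => u (j + k)) (fun j => v (j + k)) := by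
  rw [crossSum, crossSum, ← finsum_comp_equiv (Equiv.addRight ((k, k) : ℤ × ℤ))]
  refine finsum_congr fun p => if_congr ?_ rfl rfl
  simp only [Equiv.coe_addRight, Prod.fst_add, Prod.snd_add]
  omega

lemma Finset.sum_Icc_sub_add_one {G : Type*} [AddCommGroup G] (f : ℤ → G) (n : ℕ) :
    ∑ i ∈ Icc (1 : ℤ) n, (f i - f (i + 1)) = f 1 - f (n + 1) := by
  induction n with
  | zero => simp
  | succ n ih =>
    rw [Nat.cast_succ, ← insert_Icc_right_eq_Icc_add_one (by omega),
      sum_insert (by simp), ih]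
    abel

lemma Function.Periodic.sum_Icc_sub_add_one {G : Type*} [AddCommGroup G] {f : ℤ → G} {n : ℕ}
    (hf : Periodic f n) : ∑ i ∈ Icc (1 : ℤ) n, (f i - f (i + 1)) = 0 := by
  rw [Finset.sum_Icc_sub_add_one, add_comm, hf, sub_self]

namespace ThetaPlus

lemma periodic_crossSum_pred {n : ℕ} (T : ThetaPlus n) :
    Periodic (fun i => crossSum i (T.a (i - 1)) (T.a i)) n := fun i => by
  simp only [crossSum_add, ← T.periodic, add_sub_right_comm]

end ThetaPlus

theorem exponent_nonneg_general (n : ℕ) (A T : ThetaPlus n)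
    (h : ∀ i j : ℤ, i < j → T.a (i - 1) j ≤ A.a i j) :
    0 ≤ ∑ i ∈ Finset.Icc (1 : ℤ) (n : ℤ), ∑ᶠ p : ℤ × ℤ,
        (if i < p.1 ∧ p.1 < p.2 then
          (A.a i p.2 : ℤ) * (T.a i p.1 : ℤ) - (T.a i p.2 : ℤ) * (T.a (i + 1) p.1 : ℤ)
        else 0) := by
  calc (0 : ℤ)
      = ∑ i ∈ Icc (1 : ℤ) n,
          (crossSum i (T.a (i - 1)) (T.a i) - crossSum (i + 1) (T.a i) (T.a (i + 1))) := by
        simpa only [add_sub_cancel_right] using T.periodic_crossSum_pred.sum_Icc_sub_add_one.symm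
    _ ≤ ∑ i ∈ Icc (1 : ℤ) n,
          (crossSum i (A.a i) (T.a i) - crossSum i (T.a i) (T.a (i + 1))) := by
        refine sum_le_sum fun i _ => sub_le_sub ?_ ?_
        · exact crossSum_mono_left i (T.rowFinite _) (A.rowFinite i) (T.rowFinite i) (h i)
        · exact (crossSum_succ_of_eq_zero _ (T.upper _ _ (lt_irrefl _))).ge
    _ = _ := sum_congr rfl fun i _ => (finsum_ite_sub_eq_crossSum_sub i (A.rowFinite i)
        (T.rowFinite i) (T.rowFinite i) (T.rowFinite (i + 1))).symm

theorem exponent_nonneg (n : ℕ) (hn : 2 ≤ n) (A T : ThetaPlus n)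
    (h : ∀ i j : ℤ, i < j → T.a (i - 1) j ≤ A.a i j) :
    0 ≤ ∑ i ∈ Finset.Icc (1 : ℤ) (n : ℤ), ∑ᶠ p : ℤ × ℤ,
        (if i < p.1 ∧ p.1 < p.2 then
          (A.a i p.2 : ℤ) * (T.a i p.1 : ℤ) - (T.a i p.2 : ℤ) * (T.a (i + 1) p.1 : ℤ)
        else 0) :=
  exponent_nonneg_general n A T h
end

section
/- Let m, k, δ be integers with m ≥ k ≥ 1 and δ ≥ 0. Then, in ℤ[v, v^{−1}], Σ_{i=0}^{δ} (−1)^i v^{i(m−k)} [k−1+i, k−1] · [m, δ−i] = v^{−kδ} [m−k, δ]. -/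
/-- The variable `v`, viewed inside the field of rational functions (which
contains the Laurent polynomial ring `ℤ[v,v⁻¹]`). -/
noncomputable def vv : RatFunc ℚ := RatFunc.X

/-- The Gaussian polynomial `[[N,t]] = ∏_{i=1}^{t} (v^{2(N-i+1)} - 1)/(v^{2i} - 1)`,
set to `0` when `t < 0` or `t > N`. -/
noncomputable def gauss2 (N t : ℤ) : RatFunc ℚ :=
  if 0 ≤ t ∧ t ≤ N then
    ∏ i ∈ Finset.range t.toNat, (vv ^ (2 * (N - (i : ℤ))) - 1) / (vv ^ (2 * ((i : ℤ) + 1)) - 1)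
  else 0

/-- The symmetric Gaussian binomial `[N,t] = v^{-t(N-t)}·[[N,t]]`. -/
noncomputable def sgauss (N t : ℤ) : RatFunc ℚ := vv ^ (-(t * (N - t))) * gauss2 N t

lemma vv_ne_zero : vv ≠ 0 := RatFunc.X_ne_zero
lemma vv_pow_sub_one_ne_zero {n : ℤ} (hn : 0 < n) : vv ^ n - 1 ≠ 0 := by
  intro h
  have h1 : vv ^ n = 1 := by linear_combination h
  rw [show n = (n.toNat : ℤ) by omega, zpow_natCast] at h1
  have h2 : (Polynomial.X : Polynomial ℚ) ^ n.toNat = 1 := by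
    apply RatFunc.algebraMap_injective ℚ
    rw [map_pow, map_one, RatFunc.algebraMap_X]
    exact h1
  have := congrArg Polynomial.natDegree h2
  rw [Polynomial.natDegree_X_pow, Polynomial.natDegree_one] at this
  omega
lemma gauss2_eq {N t : ℤ} (h0 : 0 ≤ t) (h1 : t ≤ N) : gauss2 N t =
    ∏ i ∈ Finset.range t.toNat, (vv ^ (2 * (N - (i : ℤ))) - 1) / (vv ^ (2 * ((i : ℤ) + 1)) - 1) := by
  rw [gauss2, if_pos ⟨h0, h1⟩]

lemma gauss2_succ {N t : ℤ} (h0 : 1 ≤ t) (h1 : t ≤ N) :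
    gauss2 N t * (vv ^ (2*t) - 1) = gauss2 N (t-1) * (vv ^ (2*(N-t+1)) - 1) := by
  rw [gauss2_eq (by omega) h1, gauss2_eq (by omega : (0:ℤ) ≤ t-1) (by omega)]
  have ht : t.toNat = (t-1).toNat + 1 := by omega
  rw [ht, Finset.prod_range_succ]
  have hc : (((t-1).toNat : ℤ)) = t - 1 := by omega
  rw [hc, show 2*(N-(t-1)) = 2*(N-t+1) by ring, show 2*((t-1)+1) = 2*t by ring,
    mul_assoc, div_mul_cancel₀ _ (vv_pow_sub_one_ne_zero (by omega : (0:ℤ) < 2*t))]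

lemma gauss2_self {N : ℤ} (h : 0 ≤ N) : gauss2 N N = 1 := by
  rw [gauss2_eq h le_rfl, Finset.prod_div_distrib]
  have key : ∏ i ∈ Finset.range N.toNat, (vv ^ (2 * (N - (i:ℤ))) - 1)
      = ∏ i ∈ Finset.range N.toNat, (vv ^ (2 * ((i:ℤ) + 1)) - 1) := by
    rw [← Finset.prod_range_reflect]
    apply Finset.prod_congr rfl
    intro j hj
    simp only [Finset.mem_range] at hj
    congr 2
    omega
  rw [key, div_self]
  apply Finset.prod_ne_zero_iff.mpr
  intro i _
  exact vv_pow_sub_one_ne_zero (by omega)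

lemma gauss2_of_neg {N t : ℤ} (h : t < 0) : gauss2 N t = 0 := by
  rw [gauss2, if_neg]; omega

lemma gauss2_of_gt {N t : ℤ} (h : N < t) : gauss2 N t = 0 := by
  rw [gauss2, if_neg]; omega

lemma gauss2_zero {N : ℤ} (h : 0 ≤ N) : gauss2 N 0 = 1 := by
  rw [gauss2_eq le_rfl h]; simp

lemma gauss2_row_aux : ∀ n : ℕ, ∀ N : ℤ, 1 ≤ N → (n : ℤ) ≤ N - 1 →
    gauss2 N n * (vv ^ (2*(N-n)) - 1) = gauss2 (N-1) n * (vv ^ (2*N) - 1) := by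
  intro n
  induction n with
  | zero =>
    intro N hN h
    rw [Int.natCast_zero, sub_zero, gauss2_zero (by omega), gauss2_zero (by omega), one_mul]
  | succ n ih =>
    intro N hN h
    have hc : ((n+1 : ℕ) : ℤ) = (n : ℤ) + 1 := by push_cast; ring
    rw [hc]
    have hcancel : vv ^ (2*((n:ℤ)+1)) - 1 ≠ 0 := vv_pow_sub_one_ne_zero (by omega)
    apply mul_right_cancel₀ hcancel
    have eq1 := gauss2_succ (by omega : 1 ≤ (n:ℤ)+1) (by omega : (n:ℤ)+1 ≤ N)
    have eq2 := gauss2_succ (by omega : 1 ≤ (n:ℤ)+1) (by omega : (n:ℤ)+1 ≤ N-1)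
    have eq3 := ih N hN (by omega)
    rw [show (n:ℤ)+1-1 = (n:ℤ) by ring] at eq1 eq2
    rw [show N - ((n:ℤ)+1) + 1 = N - n by ring] at eq1
    rw [show N - 1 - ((n:ℤ)+1) + 1 = N - n - 1 by ring] at eq2
    calc gauss2 N ((n:ℤ)+1) * (vv ^ (2*(N-((n:ℤ)+1))) - 1) * (vv ^ (2*((n:ℤ)+1)) - 1)
        = gauss2 N ((n:ℤ)+1) * (vv ^ (2*((n:ℤ)+1)) - 1) * (vv ^ (2*(N-(n:ℤ)-1)) - 1) := by
          rw [show 2*(N-((n:ℤ)+1)) = 2*(N-(n:ℤ)-1) by ring]; ring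
      _ = gauss2 N (n:ℤ) * (vv ^ (2*(N-(n:ℤ))) - 1) * (vv ^ (2*(N-(n:ℤ)-1)) - 1) := by rw [eq1]
      _ = gauss2 (N-1) (n:ℤ) * (vv ^ (2*N) - 1) * (vv ^ (2*(N-(n:ℤ)-1)) - 1) := by rw [eq3]
      _ = gauss2 (N-1) ((n:ℤ)+1) * (vv ^ (2*((n:ℤ)+1)) - 1) * (vv ^ (2*N) - 1) := by
          rw [eq2]; ring
      _ = gauss2 (N-1) ((n:ℤ)+1) * (vv ^ (2*N) - 1) * (vv ^ (2*((n:ℤ)+1)) - 1) := by ring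

lemma gauss2_row {N : ℤ} (hN : 1 ≤ N) (t : ℤ) :
    gauss2 N t * (vv ^ (2*(N-t)) - 1) = gauss2 (N-1) t * (vv ^ (2*N) - 1) := by
  rcases lt_or_ge t 0 with h | h
  · rw [gauss2_of_neg h, gauss2_of_neg h, zero_mul, zero_mul]
  rcases lt_or_ge (N-1) t with h2 | h2
  · rcases lt_or_ge N t with h3 | h3
    · rw [gauss2_of_gt h3, gauss2_of_gt (by omega), zero_mul, zero_mul]
    · have : t = N := by omega
      subst this
      rw [gauss2_of_gt (by omega : t - 1 < t), zero_mul, sub_self, mul_zero, zpow_zero, sub_self, mul_zero]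
  · have : t = ((t.toNat : ℕ) : ℤ) := by omega
    rw [this]
    exact gauss2_row_aux t.toNat N hN (by omega)

lemma vv_mul_pow (a b : ℤ) : vv ^ a * vv ^ b = vv ^ (a + b) := (zpow_add₀ vv_ne_zero a b).symm

lemma pascal1 {N : ℤ} (hN : 1 ≤ N) (t : ℤ) :
    gauss2 N t = vv ^ (2*t) * gauss2 (N-1) t + gauss2 (N-1) (t-1) := by
  rcases lt_or_ge t 0 with h | h
  · rw [gauss2_of_neg h, gauss2_of_neg h, gauss2_of_neg (by omega), mul_zero, add_zero]
  rcases eq_or_lt_of_le h with h0 | h0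
  · rw [← h0, gauss2_zero (by omega), gauss2_zero (by omega), gauss2_of_neg (by omega)]
    norm_num
  rcases lt_or_ge N t with h1 | h1
  · rw [gauss2_of_gt h1, gauss2_of_gt (by omega), gauss2_of_gt (by omega), mul_zero, add_zero]
  rcases eq_or_lt_of_le h1 with h2 | h2
  · subst h2
    rw [gauss2_self (by omega), gauss2_of_gt (by omega : t - 1 < t), mul_zero, zero_add,
      gauss2_self (by omega)]
  -- main region 1 ≤ t ≤ N - 1
  apply mul_right_cancel₀ (vv_pow_sub_one_ne_zero (by omega : (0:ℤ) < 2*N))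
  have eqA := gauss2_row hN t
  have eqB : gauss2 N t * (vv ^ (2*t) - 1) = gauss2 (N-1) (t-1) * (vv ^ (2*N) - 1) := by
    have eq1 := gauss2_succ (by omega : 1 ≤ t) (by omega : t ≤ N)
    have eq2 := gauss2_row hN (t-1)
    rw [show 2*(N-(t-1)) = 2*(N-t+1) by ring] at eq2
    exact eq1.trans eq2
  have eqC : vv ^ (2*t) * vv ^ (2*(N-t)) = vv ^ (2*N) := by
    rw [vv_mul_pow, show 2*t + 2*(N-t) = 2*N by ring]
  linear_combination vv ^ (2*t) * eqA + eqB - gauss2 N t * eqC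

lemma pascal2 {N : ℤ} (hN : 1 ≤ N) (t : ℤ) :
    gauss2 N t = gauss2 (N-1) t + vv ^ (2*(N-t)) * gauss2 (N-1) (t-1) := by
  rcases lt_or_ge t 0 with h | h
  · rw [gauss2_of_neg h, gauss2_of_neg h, gauss2_of_neg (by omega), mul_zero, add_zero]
  rcases eq_or_lt_of_le h with h0 | h0
  · rw [← h0, gauss2_zero (by omega), gauss2_zero (by omega), gauss2_of_neg (by omega)]
    norm_num
  rcases lt_or_ge N t with h1 | h1
  · rw [gauss2_of_gt h1, gauss2_of_gt (by omega), gauss2_of_gt (by omega), mul_zero, add_zero]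
  rcases eq_or_lt_of_le h1 with h2 | h2
  · subst h2
    rw [gauss2_self (by omega), gauss2_of_gt (by omega : t - 1 < t), zero_add, sub_self,
      mul_zero, zpow_zero, one_mul, gauss2_self (by omega)]
  apply mul_right_cancel₀ (vv_pow_sub_one_ne_zero (by omega : (0:ℤ) < 2*N))
  have eqA := gauss2_row hN t
  have eqB : gauss2 N t * (vv ^ (2*t) - 1) = gauss2 (N-1) (t-1) * (vv ^ (2*N) - 1) := by
    have eq1 := gauss2_succ (by omega : 1 ≤ t) (by omega : t ≤ N)
    have eq2 := gauss2_row hN (t-1)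
    rw [show 2*(N-(t-1)) = 2*(N-t+1) by ring] at eq2
    exact eq1.trans eq2
  have eqC : vv ^ (2*t) * vv ^ (2*(N-t)) = vv ^ (2*N) := by
    rw [vv_mul_pow, show 2*t + 2*(N-t) = 2*N by ring]
  linear_combination eqA + vv ^ (2*(N-t)) * eqB - gauss2 N t * eqC

lemma gauss2_symm_aux : ∀ n : ℕ, ∀ t : ℤ, 0 ≤ t → t ≤ (n:ℤ) →
    gauss2 (n:ℤ) ((n:ℤ) - t) = gauss2 (n:ℤ) t := by
  intro n
  induction n with
  | zero =>
    intro t h0 h1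
    have ht : t = 0 := by omega
    subst ht
    norm_num
  | succ n ih =>
    intro t h0 h1
    have hc : ((n+1 : ℕ) : ℤ) = (n : ℤ) + 1 := by push_cast; ring
    rw [hc] at h1 ⊢
    rcases eq_or_lt_of_le h0 with rfl | hpos
    · rw [sub_zero, gauss2_self (by omega), gauss2_zero (by omega)]
    rcases eq_or_lt_of_le h1 with rfl | hlt
    · rw [sub_self, gauss2_self (by omega), gauss2_zero (by omega)]
    -- 1 ≤ t ≤ n
    have p1 := pascal1 (by omega : 1 ≤ (n:ℤ)+1) t
    have p2 := pascal2 (by omega : 1 ≤ (n:ℤ)+1) ((n:ℤ)+1-t)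
    rw [show (n:ℤ)+1-1 = (n:ℤ) by ring] at p1 p2
    rw [show (n:ℤ)+1-((n:ℤ)+1-t) = t by ring] at p2
    rw [show (n:ℤ)+1-t-1 = (n:ℤ)-t by ring] at p2
    have ih1 := ih t (by omega) (by omega)
    have ih2 := ih (t-1) (by omega) (by omega)
    rw [show (n:ℤ)-(t-1) = (n:ℤ)+1-t by ring] at ih2
    rw [p2, p1, ih1, ih2]
    ring

lemma gauss2_symm {N t : ℤ} (h0 : 0 ≤ t) (h1 : t ≤ N) : gauss2 N (N - t) = gauss2 N t := by
  have : N = ((N.toNat : ℕ) : ℤ) := by omega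
  rw [this]
  exact gauss2_symm_aux N.toNat t h0 (by omega)

noncomputable def cterm (m k δ : ℤ) (j : ℕ) : RatFunc ℚ :=
  (-1 : RatFunc ℚ)^j * vv ^ ((j:ℤ)*((j:ℤ)+1) + 2*(j:ℤ)*(m-k-δ)) *
    gauss2 (k-1+(j:ℤ)) (j:ℤ) * gauss2 m (δ-(j:ℤ))

noncomputable def dterm (m k δ : ℤ) (j : ℕ) : RatFunc ℚ :=
  (-1 : RatFunc ℚ)^j * vv ^ ((j:ℤ)*((j:ℤ)+1) + 2*(j:ℤ)*(m-k-δ)) *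
    gauss2 (k-2+(j:ℤ)) ((j:ℤ)-1) * gauss2 m (δ-(j:ℤ))

noncomputable def Gtel (m δ : ℤ) (j : ℕ) : RatFunc ℚ :=
  (-1 : RatFunc ℚ)^j * vv ^ ((j:ℤ)*((j:ℤ)+1) + 2*(j:ℤ)*(m-1-δ)) * gauss2 (m-1) (δ-(j:ℤ))

lemma tel_key (m δ : ℤ) (hm : 1 ≤ m) (j : ℕ) :
    cterm m 1 δ j = Gtel m δ j - Gtel m δ (j+1) := by
  rw [cterm, Gtel, Gtel]
  rw [show (1:ℤ)-1+(j:ℤ) = (j:ℤ) by ring, gauss2_self (by positivity)]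
  rw [pascal2 hm (δ-(j:ℤ))]
  have hcast : (((j+1 : ℕ)):ℤ) = (j:ℤ)+1 := by push_cast; ring
  rw [hcast, pow_succ]
  have hv : vv ^ ((j:ℤ)*((j:ℤ)+1) + 2*(j:ℤ)*(m-1-δ)) * vv ^ (2*(m-(δ-(j:ℤ)))) =
      vv ^ (((j:ℤ)+1)*(((j:ℤ)+1)+1) + 2*((j:ℤ)+1)*(m-1-δ)) := by
    rw [vv_mul_pow]; congr 1; ring
  have hg : δ - (j:ℤ) - 1 = δ - ((j:ℤ)+1) := by ring
  rw [← hg]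
  linear_combination ((-1:RatFunc ℚ)^j * gauss2 (m-1) (δ-(j:ℤ)-1)) * hv

lemma tel (m δ : ℤ) (hm : 1 ≤ m) (hδ : 0 ≤ δ) :
    ∑ j ∈ Finset.range (δ.toNat+1), cterm m 1 δ j = gauss2 (m-1) δ := by
  rw [Finset.sum_congr rfl (fun j _ => tel_key m δ hm j), Finset.sum_range_sub']
  rw [Gtel, Gtel]
  rw [gauss2_of_neg (by omega : δ - ((δ.toNat+1 : ℕ):ℤ) < 0)]
  norm_num

lemma dterm_zero (m k δ : ℤ) : dterm m k δ 0 = 0 := by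
  rw [dterm, gauss2_of_neg (by norm_num : ((0:ℕ):ℤ) - 1 < 0)]
  simp

lemma step1 (m k δ : ℤ) (hk : 2 ≤ k) (j : ℕ) :
    cterm m k δ j = cterm m (k-1) δ j + dterm m k δ j := by
  rw [cterm, cterm, dterm]
  have hp := pascal1 (by omega : 1 ≤ k - 1 + (j:ℤ)) (j:ℤ)
  rw [show k-1+(j:ℤ)-1 = k-2+(j:ℤ) by ring] at hp
  rw [hp, show k-1-1+(j:ℤ) = k-2+(j:ℤ) by ring]
  have hv : vv ^ ((j:ℤ)*((j:ℤ)+1) + 2*(j:ℤ)*(m-k-δ)) * vv ^ (2*(j:ℤ)) =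
      vv ^ ((j:ℤ)*((j:ℤ)+1) + 2*(j:ℤ)*(m-(k-1)-δ)) := by
    rw [vv_mul_pow]; congr 1; ring
  linear_combination ((-1:RatFunc ℚ)^j * gauss2 (k-2+(j:ℤ)) (j:ℤ) * gauss2 m (δ-(j:ℤ))) * hv

lemma step2 (m k δ : ℤ) (j : ℕ) :
    dterm m k δ (j+1) = -(vv ^ (2*(m-k-δ+1)) * cterm m k (δ-1) j) := by
  rw [dterm, cterm]
  have hcast : (((j+1 : ℕ)):ℤ) = (j:ℤ)+1 := by push_cast; ring
  rw [hcast, pow_succ]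
  rw [show k-2+((j:ℤ)+1) = k-1+(j:ℤ) by ring, show (j:ℤ)+1-1 = (j:ℤ) by ring,
    show δ-((j:ℤ)+1) = δ-1-(j:ℤ) by ring]
  have hv : vv ^ (2*(m-k-δ+1)) * vv ^ ((j:ℤ)*((j:ℤ)+1) + 2*(j:ℤ)*(m-k-(δ-1))) =
      vv ^ ((((j:ℤ)+1))*(((j:ℤ)+1)+1) + 2*((j:ℤ)+1)*(m-k-δ)) := by
    rw [vv_mul_pow]; congr 1; ring
  linear_combination (((-1:RatFunc ℚ)^j) * gauss2 (k-1+(j:ℤ)) (j:ℤ) * gauss2 m (δ-1-(j:ℤ))) * hv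

lemma main_aux : ∀ n : ℕ, ∀ k δ m : ℤ, 1 ≤ k → 0 ≤ δ → k ≤ m → (k - 1 + δ).toNat = n →
    ∑ j ∈ Finset.range (δ.toNat + 1), cterm m k δ j = gauss2 (m-k) δ := by
  intro n
  induction n using Nat.strong_induction_on with
  | _ n ih =>
    intro k δ m hk hδ hkm hn
    rcases eq_or_lt_of_le hδ with rfl | hδ1
    · -- δ = 0
      rw [show (0:ℤ).toNat = 0 from rfl, Finset.sum_range_one, cterm]
      norm_num
      rw [gauss2_zero (by omega), gauss2_zero (by omega), gauss2_zero (by omega)]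
      norm_num
    rcases eq_or_lt_of_le hk with rfl | hk1
    · -- k = 1
      exact tel m δ (by omega) hδ
    -- k ≥ 2, δ ≥ 1
    have e1 : ∑ j ∈ Finset.range (δ.toNat + 1), cterm m k δ j =
        (∑ j ∈ Finset.range (δ.toNat + 1), cterm m (k-1) δ j) +
        ∑ j ∈ Finset.range (δ.toNat + 1), dterm m k δ j := by
      rw [← Finset.sum_add_distrib]
      exact Finset.sum_congr rfl (fun j _ => step1 m k δ (by omega) j)
    have e2 : ∑ j ∈ Finset.range (δ.toNat + 1), dterm m k δ j =
        -(vv ^ (2*(m-k-δ+1)) * ∑ j ∈ Finset.range δ.toNat, cterm m k (δ-1) j) := by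
      rw [Finset.sum_range_succ', dterm_zero, add_zero, Finset.mul_sum, ← Finset.sum_neg_distrib]
      exact Finset.sum_congr rfl (fun j _ => step2 m k δ j)
    have ih1 : ∑ j ∈ Finset.range (δ.toNat + 1), cterm m (k-1) δ j = gauss2 (m-(k-1)) δ := by
      apply ih (k-1-1+δ).toNat (by omega) (k-1) δ m (by omega) hδ (by omega) rfl
    have ih2 : ∑ j ∈ Finset.range δ.toNat, cterm m k (δ-1) j = gauss2 (m-k) (δ-1) := by
      have : δ.toNat = (δ-1).toNat + 1 := by omega
      rw [this]
      apply ih (k-1+(δ-1)).toNat (by omega) k (δ-1) m hk (by omega) hkm rfl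
    rw [e1, e2, ih1, ih2]
    have hp := pascal2 (by omega : 1 ≤ m - (k-1)) δ
    rw [show m-(k-1)-1 = m-k by ring, show 2*(m-(k-1)-δ) = 2*(m-k-δ+1) by ring] at hp
    linear_combination hp


lemma sum_Icc_int (δ : ℤ) (hδ : 0 ≤ δ) (f : ℤ → RatFunc ℚ) :
    ∑ i ∈ Finset.Icc (0:ℤ) δ, f i = ∑ j ∈ Finset.range (δ.toNat+1), f (j:ℤ) := by
  refine Finset.sum_nbij' (fun a => a.toNat) (fun b => (b:ℤ)) ?_ ?_ ?_ ?_ ?_ <;>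
    simp only [Finset.mem_Icc, Finset.mem_range] <;> intros <;> first | omega | (congr; omega)

theorem gauss_identity_one (m k δ : ℤ) (hk : 1 ≤ k) (hmk : k ≤ m) (hδ : 0 ≤ δ) :
    ∑ i ∈ Finset.Icc (0 : ℤ) δ,
        (-1 : RatFunc ℚ) ^ i * vv ^ (i * (m - k)) * sgauss (k - 1 + i) (k - 1) *
          sgauss m (δ - i) =
      vv ^ (-(k * δ)) * sgauss (m - k) δ := by
  rw [sum_Icc_int δ hδ]
  have key : ∀ j : ℕ, (j:ℤ) ≤ δ →
      (-1 : RatFunc ℚ) ^ (j:ℤ) * vv ^ ((j:ℤ) * (m - k)) * sgauss (k - 1 + (j:ℤ)) (k - 1) *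
        sgauss m (δ - (j:ℤ)) = vv ^ (δ*(δ-m)) * cterm m k δ j := by
    intro j hj
    rw [sgauss, sgauss, cterm, zpow_natCast]
    have hsymm : gauss2 (k-1+(j:ℤ)) (k-1) = gauss2 (k-1+(j:ℤ)) (j:ℤ) := by
      rw [← gauss2_symm (by omega : (0:ℤ) ≤ k-1) (by omega : k-1 ≤ k-1+(j:ℤ)),
        show k-1+(j:ℤ)-(k-1) = (j:ℤ) by ring]
    rw [hsymm]
    have hv : vv ^ ((j:ℤ) * (m - k)) * vv ^ (-((k-1) * (k - 1 + (j:ℤ) - (k-1)))) *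
        vv ^ (-((δ - (j:ℤ)) * (m - (δ - (j:ℤ))))) =
        vv ^ (δ*(δ-m)) * vv ^ ((j:ℤ)*((j:ℤ)+1) + 2*(j:ℤ)*(m-k-δ)) := by
      rw [vv_mul_pow, vv_mul_pow, vv_mul_pow]; congr 1; ring
    linear_combination (gauss2 (k-1+(j:ℤ)) (j:ℤ) * gauss2 m (δ-(j:ℤ)) * (-1:RatFunc ℚ)^j) * hv
  rw [Finset.sum_congr rfl (fun j hj => key j (by
    simp only [Finset.mem_range] at hj; omega)), ← Finset.mul_sum,
    main_aux (k-1+δ).toNat k δ m hk hδ hmk rfl, sgauss]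
  rw [← mul_assoc, vv_mul_pow, show -(k*δ) + -(δ*(m-k-δ)) = δ*(δ-m) by ring]
end

section
/- Let a, b, c, d be natural numbers with a > b and c, d ≥ 1. Then the Laurent polynomial g := Σ_{k=0}^{c} (−1)^{c−k} v^{(a−b−k+d)(k−d)} [a−b−1+c−k, a−b−1] · ⟦a+c+d, k⟧ · ⟦b+c+d, d⟧ − Σ_{l=0}^{c−1} (−1)^{c−1−l} v^{(a−b−l+d−1)(l−d+1)} [a−b−2+c−l, a−b−1] · ⟦a+c+d, l⟧ · ⟦b+c+d, d−1⟧ lies in v^{−1}ℤ[v^{−1}]. Likewise, if b > a, then g' := Σ_{k=0}^{d} (−1)^{d−k} v^{(b−a−k+c)(k−c)} [b−a−1+d−k, b−a−1] · ⟦a+c+d, c⟧ · ⟦b+c+d, k⟧ − Σ_{l=0}^{d−1} (−1)^{d−1−l} v^{(b−a−l+c−1)(l−c+1)} [b−a−2+d−l, b−a−1] · ⟦a+c+d, c−1⟧ · ⟦b+c+d, l⟧ lies in v^{−1}ℤ[v^{−1}]. -/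
noncomputable section

/-- The doubly rescaled Gaussian binomial `⟦N,t⟧ = v^{-2t(N-t)}·[[N,t]]`. -/
noncomputable def dgauss (N t : ℤ) : RatFunc ℚ := vv ^ (-(2 * t * (N - t))) * gauss2 N t

/-- Membership in `v⁻¹ℤ[v⁻¹]`: a polynomial in `v⁻¹` with integer coefficients and
zero constant term. -/
def inVinv (g : RatFunc ℚ) : Prop :=
  ∃ p : Polynomial ℤ, p.coeff 0 = 0 ∧ g = Polynomial.aeval vv⁻¹ p

namespace CZZ

open Polynomial Finset

abbrev K := RatFunc ℚ

lemma vv_ne_zero : (vv : K) ≠ 0 := by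
  simpa [vv] using RatFunc.X_ne_zero

/-- Gaussian binomial coefficient as an integer polynomial in `q`. -/
noncomputable def gb : ℕ → ℕ → Polynomial ℤ
  | _, 0 => 1
  | 0, _+1 => 0
  | n+1, k+1 => gb n k + X ^ (k+1) * gb n (k+1)

@[simp] lemma gb_zero_right : ∀ n, gb n 0 = 1
  | 0 => rfl
  | _+1 => rfl

@[simp] lemma gb_zero_left (k : ℕ) : gb 0 (k+1) = 0 := rfl

lemma gb_succ_succ (n k : ℕ) : gb (n+1) (k+1) = gb n k + X ^ (k+1) * gb n (k+1) := rfl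

lemma gb_eq_zero : ∀ {n k : ℕ}, n < k → gb n k = 0 := by
  intro n
  induction n with
  | zero => intro k h; match k, h with
    | k+1, _ => rfl
  | succ n ih =>
    intro k h
    match k, h with
    | k+1, h =>
      rw [gb_succ_succ, ih (by omega), ih (by omega)]
      ring

@[simp] lemma gb_self : ∀ n, gb n n = 1
  | 0 => rfl
  | n+1 => by rw [gb_succ_succ, gb_self n, gb_eq_zero (by omega)]; ring

/-- Second Pascal rule. -/
lemma gb_pascal2 : ∀ n k : ℕ, k ≤ n → gb (n+1) (k+1) = gb n (k+1) + X ^ (n - k) * gb n k := by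
  intro n
  induction n with
  | zero => intro k hk; interval_cases k; simp [gb_succ_succ]
  | succ n ih =>
    intro k hk
    rcases Nat.eq_or_lt_of_le hk with h | h
    · subst h
      rw [gb_self, gb_eq_zero (by omega), gb_self]
      simp
    · have hk' : k ≤ n := by omega
      match k, hk' with
      | 0, _ =>
        have e1 : gb (n+1+1) (0+1) = 1 + X * gb (n+1) 1 := by
          rw [gb_succ_succ]; simp
        have e2 : gb (n+1) 1 = gb n 1 + X ^ n := by
          have := ih 0 (by omega); simpa using this
        have e3 : gb (n+1) (0+1) = 1 + X * gb n 1 := by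
          rw [gb_succ_succ]; simp
        have e4 : 1 + X * gb n 1 = gb n 1 + X ^ n := e3.symm.trans e2
        rw [e1, e2]
        simp only [gb_zero_right, Nat.sub_zero, mul_one]
        linear_combination e4
      | k+1, hk' =>
        have hk2 : k + 1 ≤ n := hk'
        have hsub : n + 1 - (k + 1) = n - k := by omega
        rw [hsub, gb_succ_succ (n+1) (k+1)]
        conv_lhs => rw [ih k (by omega), ih (k+1) hk2]
        conv_rhs => rw [gb_succ_succ n (k+1), gb_succ_succ n k]
        have hs : n - k = (n - (k+1)) + 1 := by omega
        rw [hs]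
        ring

lemma gb_natDegree_le : ∀ n k : ℕ, (gb n k).natDegree ≤ k * (n - k) := by
  intro n
  induction n with
  | zero => intro k; cases k <;> simp
  | succ n ih =>
    intro k
    cases k with
    | zero => simp
    | succ k =>
      rw [gb_succ_succ]
      by_cases hkn : k + 1 ≤ n
      · obtain ⟨s, rfl⟩ : ∃ s, n = k + 1 + s := ⟨n - (k+1), by omega⟩
        have e1 : k + 1 + s + 1 - (k + 1) = s + 1 := by omega
        have e2 : k + 1 + s - k = s + 1 := by omega
        have e3 : k + 1 + s - (k + 1) = s := by omega
        rw [e1]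
        apply le_trans (Polynomial.natDegree_add_le _ _)
        apply max_le
        · apply le_trans (ih k)
          rw [e2]
          exact Nat.mul_le_mul_right _ (by omega)
        · apply le_trans (Polynomial.natDegree_mul_le)
          have := ih (k+1)
          rw [e3] at this
          rw [Polynomial.natDegree_X_pow]
          calc k + 1 + (gb (k+1+s) (k+1)).natDegree ≤ k + 1 + (k+1) * s := by omega
            _ = (k+1) * (s+1) := by ring
      · rw [gb_eq_zero (show n < k + 1 by omega), mul_zero, add_zero]
        apply le_trans (ih k)
        have : n - k = 0 := by omega
        simp [this]

lemma gb_coeff_top : ∀ n k : ℕ, k ≤ n → (gb n k).coeff (k * (n - k)) = 1 := by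
  intro n
  induction n with
  | zero => intro k hk; interval_cases k; simp
  | succ n ih =>
    intro k hk
    cases k with
    | zero => simp
    | succ k =>
      rcases Nat.eq_or_lt_of_le hk with h | h
      · have hh : k = n := by omega
        subst hh
        simp
      · have hkn : k + 1 ≤ n := by omega
        obtain ⟨s, rfl⟩ : ∃ s, n = k + 1 + s := ⟨n - (k+1), by omega⟩
        have e1 : k + 1 + s + 1 - (k + 1) = s + 1 := by omega
        have e3 : k + 1 + s - (k + 1) = s := by omega
        rw [gb_succ_succ, Polynomial.coeff_add, e1]
        have hdeg : (gb (k+1+s) k).natDegree < (k+1) * (s+1) := by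
          have := gb_natDegree_le (k+1+s) k
          have e2 : k + 1 + s - k = s + 1 := by omega
          rw [e2] at this
          have : k * (s+1) < (k+1) * (s+1) := by nlinarith
          omega
        rw [Polynomial.coeff_eq_zero_of_natDegree_lt hdeg, zero_add,
            Nat.mul_succ, Polynomial.coeff_X_pow_mul]
        have := ih (k+1) hkn
        rw [e3] at this
        exact this

lemma gb_monic (n k : ℕ) (h : k ≤ n) : (gb n k).Monic := by
  have h1 := gb_natDegree_le n k
  have h2 := gb_coeff_top n k h
  have h3 : (gb n k).natDegree = k * (n - k) := by
    apply le_antisymm h1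
    apply Polynomial.le_natDegree_of_ne_zero
    rw [h2]; exact one_ne_zero
  rw [Polynomial.Monic, Polynomial.leadingCoeff, h3, h2]

lemma gb_natDegree (n k : ℕ) (h : k ≤ n) : (gb n k).natDegree = k * (n - k) := by
  apply le_antisymm (gb_natDegree_le n k)
  apply Polynomial.le_natDegree_of_ne_zero
  rw [gb_coeff_top n k h]; exact one_ne_zero

lemma vv_pow_ne_one (k : ℕ) (hk : 1 ≤ k) : (vv : K) ^ k ≠ 1 := by
  intro h
  have h1 : (vv : K) ^ k = algebraMap (Polynomial ℚ) (RatFunc ℚ) (X ^ k) := by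
    rw [map_pow, RatFunc.algebraMap_X]; rfl
  have h2 : algebraMap (Polynomial ℚ) (RatFunc ℚ) (X ^ k) =
      algebraMap (Polynomial ℚ) (RatFunc ℚ) 1 := by
    rw [map_one, ← h1, h]
  have h3 := RatFunc.algebraMap_injective ℚ h2
  have h4 := congrArg Polynomial.natDegree h3
  simp [Polynomial.natDegree_X_pow] at h4
  omega

lemma vv_zpow_sub_one_ne {e : ℤ} (he : 0 < e) : (vv : K) ^ e - 1 ≠ 0 := by
  rw [sub_ne_zero]
  have : e = ((e.toNat : ℕ) : ℤ) := by omega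
  rw [this, zpow_natCast]
  exact vv_pow_ne_one _ (by omega)

/-- numerator and denominator products -/
noncomputable def Nnum (n t : ℕ) : K := ∏ i ∈ range t, (vv ^ (2 * ((n : ℤ) - (i : ℤ))) - 1)
noncomputable def Dden (t : ℕ) : K := ∏ i ∈ range t, (vv ^ (2 * ((i : ℤ) + 1)) - 1)

lemma Dden_ne_zero (t : ℕ) : Dden t ≠ 0 := by
  apply Finset.prod_ne_zero_iff.2
  intro i _
  exact vv_zpow_sub_one_ne (by omega)

lemma gb_prod_eq : ∀ n t : ℕ, (Polynomial.aeval ((vv:K)^2)) (gb n t) * Dden t = Nnum n t := by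
  intro n
  induction n with
  | zero =>
    intro t
    cases t with
    | zero => simp [Dden, Nnum]
    | succ t =>
      rw [gb_zero_left, map_zero, zero_mul]
      symm
      apply Finset.prod_eq_zero (Finset.mem_range.2 (Nat.succ_pos t))
      simp
  | succ n ih =>
    intro t
    cases t with
    | zero => simp [Dden, Nnum]
    | succ t =>
      have hD : Dden (t+1) = Dden t * (vv ^ (2 * ((t : ℤ) + 1)) - 1) := Finset.prod_range_succ _ _
      have hN1 : Nnum n (t+1) = Nnum n t * (vv ^ (2 * ((n : ℤ) - (t:ℤ))) - 1) := Finset.prod_range_succ _ _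
      have hN2 : Nnum (n+1) (t+1) = Nnum n t * (vv ^ (2 * (((n:ℤ)+1))) - 1) := by
        rw [Nnum, Finset.prod_range_succ']
        rw [show (2 * (((n+1:ℕ):ℤ) - ((0:ℕ):ℤ))) = 2*((n:ℤ)+1) from by push_cast; ring]
        congr 1
        apply Finset.prod_congr rfl
        intro i _
        congr 2
        all_goals push_cast
        all_goals ring
      have hx : ((vv:K)^2) ^ (t+1) = vv ^ (2 * ((t:ℤ) + 1)) := by
        rw [← pow_mul, ← zpow_natCast]
        congr 1
        all_goals (try push_cast) <;> try omega
      rw [gb_succ_succ, map_add, map_mul, map_pow, Polynomial.aeval_X, hD, hN2, hx]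
      have e1 := ih t
      have e2 := ih (t+1)
      rw [hD] at e2
      have key : (vv:K) ^ (2 * ((t:ℤ) + 1)) * vv ^ (2 * ((n : ℤ) - (t:ℤ))) = vv ^ (2 * ((n:ℤ) + 1)) := by
        rw [← zpow_add₀ vv_ne_zero]
        congr 1
        push_cast; ring
      linear_combination (vv ^ (2*((t:ℤ)+1)) - 1) * e1 + vv ^ (2*((t:ℤ)+1)) * e2
        + vv ^ (2*((t:ℤ)+1)) * hN1 + Nnum n t * key

lemma gauss2_eq (n t : ℕ) (h : t ≤ n) :
    gauss2 (n : ℤ) (t : ℤ) = (Polynomial.aeval ((vv:K)^2)) (gb n t) := by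
  rw [gauss2, if_pos (by constructor <;> omega)]
  rw [Int.toNat_natCast]
  rw [Finset.prod_div_distrib]
  have : (∏ i ∈ range t, ((vv:K) ^ (2 * ((n:ℤ) - (i : ℤ))) - 1)) = Nnum n t := rfl
  rw [this]
  have : (∏ i ∈ range t, ((vv:K) ^ (2 * ((i:ℤ) + 1)) - 1)) = Dden t := rfl
  rw [this, ← gb_prod_eq n t, mul_div_assoc, div_self (Dden_ne_zero t), mul_one]

/-- The product `∏_{i<n} (1 - q^{s+i} z)` as a polynomial in `z`. -/
noncomputable def Gp (n : ℕ) (s : ℤ) : Polynomial K :=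
  ∏ i ∈ range n, (1 - Polynomial.C ((vv:K) ^ (2*(s + (i:ℤ)))) * Polynomial.X)

lemma coeff_one_sub_mul (P : Polynomial K) (aa : K) (p : ℕ) :
    (P * (1 - Polynomial.C aa * Polynomial.X)).coeff p
      = P.coeff p - aa * (if p = 0 then 0 else P.coeff (p-1)) := by
  have : P * (1 - Polynomial.C aa * Polynomial.X) = P - Polynomial.C aa * (P * Polynomial.X) := by
    ring
  rw [this, Polynomial.coeff_sub, Polynomial.coeff_C_mul]
  congr 1
  cases p with
  | zero => simp
  | succ p => simp [Polynomial.coeff_mul_X]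

lemma coeff_Gp (n : ℕ) (s : ℤ) : ∀ k : ℕ, (Gp n s).coeff k
    = (-1)^k * (vv:K) ^ (2*(k:ℤ)*s + (k:ℤ)*((k:ℤ)-1)) * (Polynomial.aeval ((vv:K)^2)) (gb n k) := by
  induction n with
  | zero =>
    intro k
    cases k with
    | zero => simp [Gp]
    | succ k => simp [Gp, Polynomial.coeff_one]
  | succ n ih =>
    intro k
    have hGp : Gp (n+1) s = Gp n s * (1 - Polynomial.C ((vv:K) ^ (2*(s + (n:ℤ)))) * Polynomial.X) :=
      Finset.prod_range_succ _ _
    rw [hGp, coeff_one_sub_mul]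
    cases k with
    | zero => simp [ih 0]
    | succ k =>
      rw [if_neg (Nat.succ_ne_zero k), Nat.add_sub_cancel, ih (k+1), ih k]
      by_cases hk : k ≤ n
      · have hpas : (Polynomial.aeval ((vv:K)^2)) (gb (n+1) (k+1))
            = (Polynomial.aeval ((vv:K)^2)) (gb n (k+1))
              + (vv:K) ^ (2*((n:ℤ)-(k:ℤ))) * (Polynomial.aeval ((vv:K)^2)) (gb n k) := by
          rw [gb_pascal2 n k hk, map_add, map_mul, map_pow, Polynomial.aeval_X,
              ← pow_mul,
              show (2*((n:ℤ)-(k:ℤ))) = ((2*(n-k) : ℕ) : ℤ) from by omega, zpow_natCast]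
        have hz1 : (vv:K) ^ (2*(s + (n:ℤ))) * (vv:K) ^ (2*(k:ℤ)*s + (k:ℤ)*((k:ℤ)-1))
            = (vv:K) ^ (2*((k:ℤ)+1)*s + ((k:ℤ)+1)*(((k:ℤ)+1)-1)) * (vv:K) ^ (2*((n:ℤ)-(k:ℤ))) := by
          rw [← zpow_add₀ vv_ne_zero, ← zpow_add₀ vv_ne_zero]
          congr 1
          ring
        push_cast
        rw [hpas]
        push_cast at hz1
        linear_combination (- ((-1:K)^k * (Polynomial.aeval ((vv:K)^2)) (gb n k))) * hz1
      · rw [gb_eq_zero (show n < k from by omega), gb_eq_zero (show n < k+1 from by omega),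
            gb_eq_zero (show n+1 < k+1 from by omega)]
        simp

/-- `U^{(m')}_j = [[m'+j, m']]` evaluated at `q = v²`. -/
noncomputable def Uf (m' j : ℕ) : K := (Polynomial.aeval ((vv:K)^2)) (gb (m' + j) m')

@[simp] lemma Uf_zero_left (j : ℕ) : Uf 0 j = 1 := by simp [Uf]

@[simp] lemma Uf_zero_right (m' : ℕ) : Uf m' 0 = 1 := by simp [Uf]

lemma Lpoly (m' : ℕ) : ∀ n : ℕ, gb (m'+1+n) (m'+1)
    = ∑ j ∈ range (n+1), X ^ ((m'+1)*(n-j)) * gb (m'+j) m' := by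
  intro n
  induction n with
  | zero => simp
  | succ n ih =>
    rw [show m'+1+(n+1) = (m'+1+n)+1 from by omega]
    rw [gb_succ_succ (m'+1+n) m', Finset.sum_range_succ]
    have h1 : ∑ j ∈ range (n+1), (X:Polynomial ℤ) ^ ((m'+1)*(n+1-j)) * gb (m'+j) m'
        = X ^ (m'+1) * ∑ j ∈ range (n+1), X ^ ((m'+1)*(n-j)) * gb (m'+j) m' := by
      rw [Finset.mul_sum]
      apply Finset.sum_congr rfl
      intro j hj
      have hj' : j ≤ n := by simpa using Nat.lt_succ_iff.1 (Finset.mem_range.1 hj)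
      rw [← mul_assoc, ← pow_add]
      congr 2
      have : n + 1 - j = (n - j) + 1 := by omega
      rw [this, Nat.mul_succ]
      omega
    rw [h1, ← ih]
    have h2 : (m'+1) * (n+1-(n+1)) = 0 := by simp
    rw [h2, pow_zero, one_mul]
    have h3 : m' + (n+1) = m'+1+n := by omega
    rw [h3]
    ring

lemma Lmap (m' n : ℕ) : Uf (m'+1) n
    = ∑ j ∈ range (n+1), (vv:K) ^ (2*((m'+1)*(n-j))) * Uf m' j := by
  rw [Uf, Lpoly m' n, map_sum]
  apply Finset.sum_congr rfl
  intro j _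
  rw [map_mul, map_pow, Polynomial.aeval_X, ← pow_mul]
  rfl

lemma tri2 (f : ℕ → ℕ → K) (n : ℕ) :
    ∑ p ∈ range (n+1), ∑ t ∈ range (n+1-p), f p t
      = ∑ t ∈ range (n+1), ∑ p ∈ range (n+1-t), f p t := by
  have h : ∀ (g : ℕ → ℕ → K) (p : ℕ), p ≤ n →
      ∑ t ∈ range (n+1-p), g p t = ∑ t ∈ range (n+1), if p + t ≤ n then g p t else 0 := by
    intro g p hp
    rw [← Finset.sum_subset (Finset.range_subset_range.2 (show n+1-p ≤ n+1 from by omega))]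
    · apply Finset.sum_congr rfl
      intro t ht
      rw [if_pos (show p + t ≤ n from by have := Finset.mem_range.1 ht; omega)]
    · intro t ht hnt
      rw [if_neg]
      have := Finset.mem_range.1 ht
      simp only [Finset.mem_range] at hnt
      omega
  calc ∑ p ∈ range (n+1), ∑ t ∈ range (n+1-p), f p t
      = ∑ p ∈ range (n+1), ∑ t ∈ range (n+1), if p + t ≤ n then f p t else 0 := by
        apply Finset.sum_congr rfl
        intro p hp
        exact h f p (by have := Finset.mem_range.1 hp; omega)
    _ = ∑ t ∈ range (n+1), ∑ p ∈ range (n+1), if p + t ≤ n then f p t else 0 := Finset.sum_comm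
    _ = ∑ t ∈ range (n+1), ∑ p ∈ range (n+1), if t + p ≤ n then f p t else 0 := by
        apply Finset.sum_congr rfl
        intro t _
        apply Finset.sum_congr rfl
        intro p _
        congr 1
        simp [Nat.add_comm]
    _ = ∑ t ∈ range (n+1), ∑ p ∈ range (n+1-t), f p t := by
        apply Finset.sum_congr rfl
        intro t ht
        exact (h (fun t p => f p t) t (by have := Finset.mem_range.1 ht; omega)).symm

lemma tri1 (f : ℕ → ℕ → K) (n : ℕ) :
    ∑ p ∈ range (n+1), ∑ t ∈ range (n+1-p), f p t
      = ∑ u ∈ range (n+1), ∑ p ∈ range (u+1), f p (u - p) := by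
  symm
  have step1 : ∀ u ∈ range (n+1),
      ∑ p ∈ range (u+1), f p (u-p) = ∑ p ∈ range (n+1), if p ≤ u then f p (u-p) else 0 := by
    intro u hu
    have hu' : u ≤ n := by have := Finset.mem_range.1 hu; omega
    rw [← Finset.sum_subset (Finset.range_subset_range.2 (show u+1 ≤ n+1 from by omega))]
    · apply Finset.sum_congr rfl
      intro p hp
      rw [if_pos (show p ≤ u from by have := Finset.mem_range.1 hp; omega)]
    · intro p hp hnp
      rw [if_neg]
      simp only [Finset.mem_range] at hnp
      omega
  calc ∑ u ∈ range (n+1), ∑ p ∈ range (u+1), f p (u - p)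
      = ∑ u ∈ range (n+1), ∑ p ∈ range (n+1), if p ≤ u then f p (u-p) else 0 :=
        Finset.sum_congr rfl step1
    _ = ∑ p ∈ range (n+1), ∑ u ∈ range (n+1), if p ≤ u then f p (u-p) else 0 := Finset.sum_comm
    _ = ∑ p ∈ range (n+1), ∑ t ∈ range (n+1-p), f p t := by
        apply Finset.sum_congr rfl
        intro p hp
        have hp' : p ≤ n := by have := Finset.mem_range.1 hp; omega
        rw [show n+1 = p + (n+1-p) from by omega, Finset.sum_range_add]
        have hz : (∑ u ∈ range p, if p ≤ u then f p (u-p) else 0) = 0 := by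
          apply Finset.sum_eq_zero
          intro u hu
          rw [if_neg (show ¬ p ≤ u from by have := Finset.mem_range.1 hu; omega)]
        rw [hz, zero_add]
        apply Finset.sum_congr
        · congr 1; omega
        · intro i _
          rw [if_pos (Nat.le_add_right p i), Nat.add_sub_cancel_left]

lemma gb_one (p : ℕ) (hp : 2 ≤ p) : gb 1 p = 0 := gb_eq_zero (by omega)

lemma star0 : ∀ n : ℕ, ∑ p ∈ range (n+1), (Gp 1 0).coeff p * Uf 0 (n-p)
    = if n = 0 then 1 else 0 := by
  intro n
  have hcoeff : ∀ p : ℕ, (Gp 1 0).coeff p * Uf 0 (n-p)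
      = if p = 0 then 1 else if p = 1 then -1 else 0 := by
    intro p
    rw [coeff_Gp, Uf_zero_left, mul_one]
    match p with
    | 0 => simp
    | 1 =>
      have : gb 1 1 = 1 := by rw [gb_succ_succ]; simp
      rw [this]
      norm_num
    | (p+2) =>
      rw [gb_one (p+2) (by omega)]
      simp
  rw [Finset.sum_congr rfl (fun p _ => hcoeff p)]
  match n with
  | 0 => simp
  | (n+1) =>
    rw [if_neg (Nat.succ_ne_zero n), show n+1+1 = 2+n from by omega, Finset.sum_range_add]
    have h1 : (∑ i ∈ range 2, if i = 0 then (1:K) else if i = 1 then -1 else 0) = 0 := by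
      simp [Finset.sum_range_succ]
    have h2 : (∑ i ∈ range n, if 2+i = 0 then (1:K) else if 2+i = 1 then -1 else 0) = 0 := by
      apply Finset.sum_eq_zero
      intro i _
      rw [if_neg (by omega), if_neg (by omega)]
    rw [h1, h2, add_zero]

lemma staraux (m' : ℕ)
    (hstar : ∀ n : ℕ, ∑ p ∈ range (n+1), (Gp (m'+1) 0).coeff p * Uf m' (n-p)
      = if n = 0 then 1 else 0) :
    ∀ n : ℕ, ∑ p ∈ range (n+1), (Gp (m'+1) 0).coeff p * Uf (m'+1) (n-p)
      = (vv:K) ^ (2*((m'+1)*n)) := by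
  intro n
  have step1 : ∀ p, p ∈ range (n+1) → (Gp (m'+1) 0).coeff p * Uf (m'+1) (n-p)
      = ∑ t ∈ range (n+1-p), (Gp (m'+1) 0).coeff p
          * ((vv:K) ^ (2*((m'+1)*((n-p)-t))) * Uf m' t) := by
    intro p hp
    have hp' : p ≤ n := by have := Finset.mem_range.1 hp; omega
    rw [Lmap m' (n-p), Finset.mul_sum, show n+1-p = (n-p)+1 from by omega]
  rw [Finset.sum_congr rfl step1]
  rw [tri1 (fun p t => (Gp (m'+1) 0).coeff p * ((vv:K) ^ (2*((m'+1)*((n-p)-t))) * Uf m' t)) n]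
  have step2 : ∀ u, u ∈ range (n+1) →
      (∑ p ∈ range (u+1), (Gp (m'+1) 0).coeff p
        * ((vv:K) ^ (2*((m'+1)*((n-p)-(u-p)))) * Uf m' (u-p)))
      = (vv:K) ^ (2*((m'+1)*(n-u))) * (if u = 0 then 1 else 0) := by
    intro u hu
    have hu' : u ≤ n := by have := Finset.mem_range.1 hu; omega
    rw [← hstar u, Finset.mul_sum]
    apply Finset.sum_congr rfl
    intro p hp
    have hp' : p ≤ u := by have := Finset.mem_range.1 hp; omega
    rw [show (n-p)-(u-p) = n-u from by omega]
    ring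
  rw [Finset.sum_congr rfl step2]
  rw [Finset.sum_eq_single 0]
  · simp
  · intro u _ hu
    rw [if_neg hu, mul_zero]
  · intro h
    simp at h

lemma star (m' : ℕ) : ∀ n : ℕ, ∑ p ∈ range (n+1), (Gp (m'+1) 0).coeff p * Uf m' (n-p)
    = if n = 0 then 1 else 0 := by
  induction m' with
  | zero => exact star0
  | succ m' ih =>
    intro n
    have hsplit : Gp (m'+1+1) 0 = Gp (m'+1) 0
        * (1 - Polynomial.C ((vv:K) ^ (2*((0:ℤ) + ((m'+1:ℕ):ℤ)))) * Polynomial.X) :=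
      Finset.prod_range_succ _ _
    have ha : (vv:K) ^ (2*((0:ℤ) + ((m'+1:ℕ):ℤ))) = (vv:K) ^ (2*(m'+1)) := by
      rw [show (2*((0:ℤ) + ((m'+1:ℕ):ℤ))) = ((2*(m'+1) : ℕ) : ℤ) from by push_cast; ring,
          zpow_natCast]
    have hterm : ∀ p, p ∈ range (n+1) → (Gp (m'+1+1) 0).coeff p * Uf (m'+1) (n-p)
        = (Gp (m'+1) 0).coeff p * Uf (m'+1) (n-p)
          - (vv:K) ^ (2*(m'+1)) * ((if p = 0 then 0 else (Gp (m'+1) 0).coeff (p-1)) * Uf (m'+1) (n-p)) := by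
      intro p _
      rw [hsplit, coeff_one_sub_mul, ha]
      ring
    rw [Finset.sum_congr rfl hterm, Finset.sum_sub_distrib, staraux m' ih n, ← Finset.mul_sum]
    cases n with
    | zero =>
      simp
    | succ n =>
      have hshift : (∑ p ∈ range (n+1+1),
          (if p = 0 then 0 else (Gp (m'+1) 0).coeff (p-1)) * Uf (m'+1) (n+1-p))
          = ∑ i ∈ range (n+1), (Gp (m'+1) 0).coeff i * Uf (m'+1) (n-i) := by
        rw [Finset.sum_range_succ']
        have hlast : (if (0:ℕ) = 0 then (0:K) else (Gp (m'+1) 0).coeff (0-1)) * Uf (m'+1) (n+1-0) = 0 := by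
          simp
        rw [hlast, add_zero]
        apply Finset.sum_congr rfl
        intro i _
        rw [if_neg (Nat.succ_ne_zero i), show i+1-1 = i from rfl, show n+1-(i+1) = n-i from by omega]
      rw [hshift, staraux m' ih n]
      rw [if_neg (Nat.succ_ne_zero n), ← pow_add]
      rw [show 2*(m'+1) + 2*((m'+1)*n) = 2*((m'+1)*(n+1)) from by ring]
      ring

lemma convKey (G H : Polynomial K) (u : ℕ → K)
    (hG : ∀ n, ∑ p ∈ range (n+1), G.coeff p * u (n-p) = if n = 0 then 1 else 0) (Cc : ℕ) :
    ∑ k ∈ range (Cc+1), (G*H).coeff k * u (Cc-k) = H.coeff Cc := by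
  have hmul : ∀ k, (G*H).coeff k = ∑ x ∈ range (k+1), G.coeff x * H.coeff (k-x) := by
    intro k
    rw [Polynomial.coeff_mul, Finset.Nat.sum_antidiagonal_eq_sum_range_succ_mk]
  calc ∑ k ∈ range (Cc+1), (G*H).coeff k * u (Cc-k)
      = ∑ k ∈ range (Cc+1), ∑ x ∈ range (k+1), G.coeff x * H.coeff (k-x) * u (Cc-k) := by
        apply Finset.sum_congr rfl
        intro k _
        rw [hmul, Finset.sum_mul]
    _ = ∑ p ∈ range (Cc+1), ∑ t ∈ range (Cc+1-p), G.coeff p * H.coeff t * u (Cc-p-t) := by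
        rw [tri1 (fun p t => G.coeff p * H.coeff t * u (Cc-p-t)) Cc]
        apply Finset.sum_congr rfl
        intro k hk
        apply Finset.sum_congr rfl
        intro x hx
        have hk' : k ≤ Cc := by have := Finset.mem_range.1 hk; omega
        have hx' : x ≤ k := by have := Finset.mem_range.1 hx; omega
        congr 2
        omega
    _ = ∑ t ∈ range (Cc+1), ∑ p ∈ range (Cc+1-t), G.coeff p * H.coeff t * u (Cc-p-t) := by
        rw [tri2 (fun p t => G.coeff p * H.coeff t * u (Cc-p-t)) Cc]
    _ = ∑ t ∈ range (Cc+1), H.coeff t * (if Cc-t = 0 then 1 else 0) := by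
        apply Finset.sum_congr rfl
        intro t ht
        have ht' : t ≤ Cc := by have := Finset.mem_range.1 ht; omega
        rw [← hG (Cc-t), Finset.mul_sum, show Cc+1-t = (Cc-t)+1 from by omega]
        apply Finset.sum_congr rfl
        intro p hp
        have hp' : p ≤ Cc - t := by have := Finset.mem_range.1 hp; omega
        rw [show Cc-p-t = Cc-t-p from by omega]
        ring
    _ = H.coeff Cc := by
        rw [Finset.sum_eq_single Cc]
        · simp
        · intro t ht htne
          rw [if_neg (show ¬ Cc - t = 0 from by have := Finset.mem_range.1 ht; omega), mul_zero]
        · intro h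
          simp at h

lemma VdG (m' P D Cc : ℕ) :
    ∑ k ∈ range (Cc+1), (Gp (P + (m'+1) + D) (-(P:ℤ))).coeff k * Uf m' (Cc - k)
      = ∑ j ∈ range (Cc+1), (Gp P (-(P:ℤ))).coeff j * (Gp D ((m':ℤ)+1)).coeff (Cc - j) := by
  have hsplitprod : Gp (P + (m'+1) + D) (-(P:ℤ))
      = Gp (m'+1) 0 * (Gp P (-(P:ℤ)) * Gp D ((m':ℤ)+1)) := by
    rw [Gp, show P + (m'+1) + D = P + ((m'+1) + D) from by omega, Finset.prod_range_add,
        Finset.prod_range_add]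
    have e1 : (∏ i ∈ range P, (1 - Polynomial.C ((vv:K) ^ (2*(-(P:ℤ) + (i:ℤ)))) * Polynomial.X))
        = Gp P (-(P:ℤ)) := rfl
    have e2 : (∏ i ∈ range (m'+1),
          (1 - Polynomial.C ((vv:K) ^ (2*(-(P:ℤ) + ((P + i : ℕ):ℤ)))) * Polynomial.X))
        = Gp (m'+1) 0 := by
      apply Finset.prod_congr rfl
      intro i _
      congr 3
      push_cast; ring
    have e3 : (∏ i ∈ range D,
          (1 - Polynomial.C ((vv:K) ^ (2*(-(P:ℤ) + ((P + (m'+1+i) : ℕ):ℤ)))) * Polynomial.X))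
        = Gp D ((m':ℤ)+1) := by
      apply Finset.prod_congr rfl
      intro i _
      congr 3
      push_cast; ring
    rw [e1, e2, e3]
    ring
  have hcm : ∀ k, (Gp (P + (m'+1) + D) (-(P:ℤ))).coeff k
      = (Gp (m'+1) 0 * (Gp P (-(P:ℤ)) * Gp D ((m':ℤ)+1))).coeff k := by
    intro k; rw [hsplitprod]
  calc ∑ k ∈ range (Cc+1), (Gp (P + (m'+1) + D) (-(P:ℤ))).coeff k * Uf m' (Cc - k)
      = ∑ k ∈ range (Cc+1),
          (Gp (m'+1) 0 * (Gp P (-(P:ℤ)) * Gp D ((m':ℤ)+1))).coeff k * Uf m' (Cc - k) := by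
        apply Finset.sum_congr rfl
        intro k _
        rw [hcm]
    _ = (Gp P (-(P:ℤ)) * Gp D ((m':ℤ)+1)).coeff Cc := convKey _ _ _ (star m') Cc
    _ = ∑ j ∈ range (Cc+1), (Gp P (-(P:ℤ))).coeff j * (Gp D ((m':ℤ)+1)).coeff (Cc - j) := by
        rw [Polynomial.coeff_mul, Finset.Nat.sum_antidiagonal_eq_sum_range_succ_mk]

lemma exists_poly (p : Polynomial ℤ) (e : ℤ) (he : e + 2 * (p.natDegree : ℤ) ≤ 0) :
    ∃ P : Polynomial ℤ,
      P.coeff 0 = (if e + 2 * (p.natDegree : ℤ) = 0 then p.leadingCoeff else 0) ∧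
      (vv:K) ^ e * (Polynomial.aeval ((vv:K)^2)) p = Polynomial.aeval (vv⁻¹ : K) P := by
  set d := p.natDegree with hd
  set N := (-e).toNat with hN
  have hNd : 2 * d ≤ N := by omega
  refine ⟨∑ i ∈ range (d+1), Polynomial.C (p.coeff i) * X ^ (N - 2*i), ?_, ?_⟩
  · rw [Polynomial.finset_sum_coeff]
    have hco : ∀ i : ℕ, (Polynomial.C (p.coeff i) * X ^ (N - 2*i)).coeff 0
        = if N - 2*i = 0 then p.coeff i else 0 := by
      intro i
      rw [Polynomial.coeff_C_mul, Polynomial.coeff_X_pow]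
      by_cases h : N - 2*i = 0
      · rw [if_pos h, if_pos h.symm, mul_one]
      · rw [if_neg h, if_neg (fun hh => h hh.symm), mul_zero]
    rw [Finset.sum_congr rfl (fun i _ => hco i)]
    by_cases hcase : e + 2 * (d:ℤ) = 0
    · rw [if_pos hcase, Finset.sum_eq_single d]
      · rw [if_pos (by omega), Polynomial.leadingCoeff]
      · intro i hi hne
        have : i < d := by have := Finset.mem_range.1 hi; omega
        rw [if_neg (by omega)]
      · intro h; simp at h
    · rw [if_neg hcase]
      apply Finset.sum_eq_zero
      intro i hi
      have : i ≤ d := by have := Finset.mem_range.1 hi; omega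
      rw [if_neg (by omega)]
  · rw [map_sum, Polynomial.aeval_eq_sum_range ((vv:K)^2), Finset.mul_sum]
    apply Finset.sum_congr rfl
    intro i hi
    have hi' : i ≤ d := by have := Finset.mem_range.1 hi; omega
    rw [map_mul, Polynomial.aeval_C, map_pow, Polynomial.aeval_X]
    have hpow : ((vv:K)⁻¹) ^ (N - 2*i) = (vv:K) ^ (e + 2*(i:ℤ)) := by
      rw [inv_pow, ← zpow_natCast, ← zpow_neg]
      congr 1
      omega
    have hpow2 : (vv:K) ^ e * ((vv:K)^2)^i = (vv:K) ^ (e + 2*(i:ℤ)) := by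
      rw [← pow_mul, ← zpow_natCast, ← zpow_add₀ vv_ne_zero]
      congr 1
      all_goals push_cast
      all_goals ring
    rw [hpow, Algebra.smul_def, ← hpow2]
    ring

def lowC (x : K) (c0 : ℤ) : Prop :=
  ∃ P : Polynomial ℤ, P.coeff 0 = c0 ∧ x = Polynomial.aeval (vv⁻¹:K) P

lemma lowC_sub {x y : K} {cx cy : ℤ} (hx : lowC x cx) (hy : lowC y cy) :
    lowC (x - y) (cx - cy) := by
  obtain ⟨P, hP, hPx⟩ := hx
  obtain ⟨Q, hQ, hQy⟩ := hy
  exact ⟨P - Q, by simp [hP, hQ], by simp [hPx, hQy]⟩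

lemma lowC_sum {ι : Type*} (s : Finset ι) (f : ι → K) (g : ι → ℤ)
    (h : ∀ i ∈ s, lowC (f i) (g i)) : lowC (∑ i ∈ s, f i) (∑ i ∈ s, g i) := by
  classical
  revert h
  refine Finset.induction_on s ?_ ?_
  · intro _
    exact ⟨0, by simp, by simp⟩
  · intro a s ha ih h
    rw [Finset.sum_insert ha, Finset.sum_insert ha]
    obtain ⟨P, hP, hPx⟩ := h a (Finset.mem_insert_self a s)
    obtain ⟨Q, hQ, hQx⟩ := ih (fun i hi => h i (Finset.mem_insert_of_mem hi))
    exact ⟨P + Q, by simp [hP, hQ], by simp [hPx, hQx]⟩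

lemma lowC_term (n1 k1 n2 k2 n3 k3 : ℕ) (e : ℤ)
    (h1 : k1 ≤ n1) (h2 : k2 ≤ n2) (h3 : k3 ≤ n3)
    (he : e + 2*((k1*(n1-k1) + k2*(n2-k2) + k3*(n3-k3) : ℕ) : ℤ) ≤ 0) :
    lowC ((vv:K)^e * ((Polynomial.aeval ((vv:K)^2)) (gb n1 k1)
        * (Polynomial.aeval ((vv:K)^2)) (gb n2 k2) * (Polynomial.aeval ((vv:K)^2)) (gb n3 k3)))
      (if e + 2*((k1*(n1-k1) + k2*(n2-k2) + k3*(n3-k3) : ℕ) : ℤ) = 0 then 1 else 0) := by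
  have hm12 : (gb n1 k1 * gb n2 k2).Monic := (gb_monic _ _ h1).mul (gb_monic _ _ h2)
  have hm : (gb n1 k1 * gb n2 k2 * gb n3 k3).Monic := hm12.mul (gb_monic _ _ h3)
  have hdeg : (gb n1 k1 * gb n2 k2 * gb n3 k3).natDegree
      = k1*(n1-k1) + k2*(n2-k2) + k3*(n3-k3) := by
    rw [hm12.natDegree_mul (gb_monic _ _ h3), (gb_monic _ _ h1).natDegree_mul (gb_monic _ _ h2),
        gb_natDegree _ _ h1, gb_natDegree _ _ h2, gb_natDegree _ _ h3]
  obtain ⟨P, hP0, hPe⟩ := exists_poly (gb n1 k1 * gb n2 k2 * gb n3 k3) e (by rw [hdeg]; exact_mod_cast he)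
  refine ⟨P, ?_, ?_⟩
  · rw [hP0, hm.leadingCoeff, hdeg]
  · rw [← hPe, map_mul, map_mul]

lemma vv_merge (e1 e2 : ℤ) : (vv:K) ^ e1 * (vv:K) ^ e2 = (vv:K) ^ (e1 + e2) :=
  (zpow_add₀ vv_ne_zero e1 e2).symm

lemma neg_one_zpow_sub (u t : ℕ) : (-1:K) ^ ((u:ℤ) - (t:ℤ)) = (-1:K) ^ u * (-1:K) ^ t := by
  rw [zpow_sub₀ (by norm_num : (-1:K) ≠ 0), zpow_natCast, zpow_natCast, div_eq_mul_inv]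
  congr 1
  rw [← inv_pow, inv_neg, inv_one]

lemma sgauss_nat' (n t : ℕ) (e : ℤ) (h : t ≤ n) (he : e = -((t:ℤ) * ((n:ℤ) - t))) :
    sgauss (n:ℤ) (t:ℤ) = vv ^ e * (Polynomial.aeval ((vv:K)^2)) (gb n t) := by
  rw [sgauss, gauss2_eq n t h, he]

lemma dgauss_nat' (n t : ℕ) (e : ℤ) (h : t ≤ n) (he : e = -(2 * (t:ℤ) * ((n:ℤ) - t))) :
    dgauss (n:ℤ) (t:ℤ) = vv ^ e * (Polynomial.aeval ((vv:K)^2)) (gb n t) := by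
  rw [dgauss, gauss2_eq n t h, he]

/-- first-sum α exponent -/
def alA (a b c d j : ℕ) : ℤ :=
  -(d:ℤ)*(((a:ℤ)-b)+d) - c*(((a:ℤ)-b)-1) - 2*j*((b:ℤ)+c) + j*((j:ℤ)-1)
  + 2*((c:ℤ)-j)*(((a:ℤ)-b-1)+1) + ((c:ℤ)-j)*((c:ℤ)-j-1) - 2*d*(((b:ℤ)+c+d)-d)

/-- second-sum β exponent -/
def alB (a b c d j : ℕ) : ℤ :=
  (((a:ℤ)-b)+d-1)*(1-(d:ℤ)) - (((a:ℤ)-b)-1)*((c:ℤ)-1) - 2*j*((b:ℤ)+c+1) + j*((j:ℤ)-1)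
  + 2*((c:ℤ)-1-j)*(((a:ℤ)-b-1)+1) + ((c:ℤ)-1-j)*((c:ℤ)-1-j-1)
  - 2*((d:ℤ)-1)*(((b:ℤ)+c+d)-((d:ℤ)-1))

noncomputable def phi3 (n1 k1 n2 k2 n3 k3 : ℕ) : K :=
  (Polynomial.aeval ((vv:K)^2)) (gb n1 k1) * (Polynomial.aeval ((vv:K)^2)) (gb n2 k2)
    * (Polynomial.aeval ((vv:K)^2)) (gb n3 k3)

lemma sum1_eq (a b c d : ℕ) (hba : b < a) (hc : 1 ≤ c) (hd : 1 ≤ d) :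
    (∑ k ∈ Finset.range (c + 1),
        (-1 : RatFunc ℚ) ^ ((c : ℤ) - k) *
          vv ^ (((a : ℤ) - b - k + d) * ((k : ℤ) - d)) *
          sgauss ((a : ℤ) - b - 1 + c - k) ((a : ℤ) - b - 1) *
          dgauss ((a : ℤ) + c + d) k * dgauss ((b : ℤ) + c + d) d)
      = ∑ j ∈ range (c+1), vv ^ (alA a b c d j) * phi3 (b+c) j d (c-j) (b+c+d) d := by
  set m' := a - b - 1 with hm'
  have hEA : ∀ k ∈ range (c+1),
      (-1 : K) ^ ((c : ℤ) - k) *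
          vv ^ (((a : ℤ) - b - k + d) * ((k : ℤ) - d)) *
          sgauss ((a : ℤ) - b - 1 + c - k) ((a : ℤ) - b - 1) *
          dgauss ((a : ℤ) + c + d) k * dgauss ((b : ℤ) + c + d) d
        = ((-1:K)^c * vv ^ (-(d:ℤ)*(((a:ℤ)-b)+d) - c*((m':ℕ):ℤ)) * dgauss ((b : ℤ) + c + d) d)
          * ((Gp ((b+c) + (m'+1) + d) (-((b+c:ℕ):ℤ))).coeff k * Uf m' (c-k)) := by
    intro k hk
    have hkc : k ≤ c := by have := Finset.mem_range.1 hk; omega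
    have h1 : ((a : ℤ) - b - 1 + c - k) = ((m' + (c-k) : ℕ) : ℤ) := by omega
    have h2 : ((a : ℤ) - b - 1) = ((m' : ℕ) : ℤ) := by omega
    have h3 : ((a : ℤ) + c + d) = (((b+c) + (m'+1) + d : ℕ) : ℤ) := by omega
    rw [h1, h2, h3]
    rw [sgauss_nat' (m' + (c-k)) m' (-(((a:ℤ)-b-1) * ((c:ℤ)-k))) (by omega)
        (by rw [show ((m' + (c-k) : ℕ) : ℤ) = ((a:ℤ)-b-1) + ((c:ℤ)-k) from by omega,
                show ((m' : ℕ) : ℤ) = (a:ℤ)-b-1 from by omega]; ring)]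
    rw [dgauss_nat' ((b+c) + (m'+1) + d) k (-(2*(k:ℤ)*(((a:ℤ)+c+d) - k))) (by omega)
        (by rw [show (((b+c) + (m'+1) + d : ℕ) : ℤ) = (a:ℤ)+c+d from by omega])]
    rw [coeff_Gp, neg_one_zpow_sub c k]
    have hUf : (Polynomial.aeval ((vv:K)^2)) (gb (m' + (c-k)) m') = Uf m' (c-k) := rfl
    rw [hUf]
    have hvv : vv ^ (((a : ℤ) - b - k + d) * ((k : ℤ) - d))
        * vv ^ (-(((a:ℤ)-b-1) * ((c:ℤ)-k))) * vv ^ (-(2*(k:ℤ)*(((a:ℤ)+c+d) - k)))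
        = vv ^ (-(d:ℤ)*(((a:ℤ)-b)+d) - c*((m':ℕ):ℤ))
          * vv ^ (2*(k:ℤ)*(-((b+c:ℕ):ℤ)) + (k:ℤ)*((k:ℤ)-1)) := by
      rw [vv_merge, vv_merge, vv_merge]
      congr 1
      rw [show ((m':ℕ):ℤ) = (a:ℤ)-b-1 from by omega]
      push_cast
      ring
    linear_combination ((-1:K)^c * (-1:K)^k * Uf m' (c-k)
      * (Polynomial.aeval ((vv:K)^2)) (gb ((b+c) + (m'+1) + d) k)
      * dgauss ((b : ℤ) + c + d) d) * hvv
  rw [Finset.sum_congr rfl hEA, ← Finset.mul_sum, VdG m' (b+c) d c, Finset.mul_sum]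
  apply Finset.sum_congr rfl
  intro j hj
  have hjc : j ≤ c := by have := Finset.mem_range.1 hj; omega
  rw [coeff_Gp, coeff_Gp]
  have hMd : ((b : ℤ) + c + d) = (((b+c+d) : ℕ) : ℤ) := by omega
  rw [hMd, dgauss_nat' (b+c+d) d (-(2*(d:ℤ)*(((b:ℤ)+c+d) - d))) (by omega)
      (by rw [show (((b+c+d) : ℕ) : ℤ) = (b:ℤ)+c+d from by omega])]
  have hsign : (-1:K)^c * ((-1:K)^j * (-1:K)^(c-j)) = 1 := by
    rw [← pow_add, show j + (c-j) = c from by omega, ← pow_add]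
    exact Even.neg_one_pow ⟨c, by omega⟩
  have hvv2 : vv ^ (-(d:ℤ)*(((a:ℤ)-b)+d) - c*((m':ℕ):ℤ))
      * vv ^ (-(2*(d:ℤ)*(((b:ℤ)+c+d) - d)))
      * vv ^ (2*(j:ℤ)*(-((b+c:ℕ):ℤ)) + (j:ℤ)*((j:ℤ)-1))
      * vv ^ (2*((c-j:ℕ):ℤ)*(((m':ℕ):ℤ)+1) + ((c-j:ℕ):ℤ)*(((c-j:ℕ):ℤ)-1))
      = vv ^ (alA a b c d j) := by
    rw [vv_merge, vv_merge, vv_merge]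
    congr 1
    rw [show ((c-j:ℕ):ℤ) = (c:ℤ)-j from by omega, show ((m':ℕ):ℤ) = (a:ℤ)-b-1 from by omega]
    rw [alA]
    push_cast
    ring
  rw [phi3]
  linear_combination ((Polynomial.aeval ((vv:K)^2)) (gb (b+c) j)
      * (Polynomial.aeval ((vv:K)^2)) (gb d (c-j))
      * (Polynomial.aeval ((vv:K)^2)) (gb (b+c+d) d)) * (vv ^ (alA a b c d j)) * hsign
    + ((Polynomial.aeval ((vv:K)^2)) (gb (b+c) j)
      * (Polynomial.aeval ((vv:K)^2)) (gb d (c-j))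
      * (Polynomial.aeval ((vv:K)^2)) (gb (b+c+d) d)
      * ((-1:K)^c * (-1:K)^j * (-1:K)^(c-j))) * hvv2

lemma sum2_eq (a b c d : ℕ) (hba : b < a) (hc : 1 ≤ c) (hd : 1 ≤ d) :
    (∑ l ∈ Finset.range c,
        (-1 : RatFunc ℚ) ^ ((c : ℤ) - 1 - l) *
          vv ^ (((a : ℤ) - b - l + d - 1) * ((l : ℤ) - d + 1)) *
          sgauss ((a : ℤ) - b - 2 + c - l) ((a : ℤ) - b - 1) *
          dgauss ((a : ℤ) + c + d) l * dgauss ((b : ℤ) + c + d) ((d : ℤ) - 1))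
      = ∑ j ∈ range c, vv ^ (alB a b c d j) * phi3 (b+c+1) j (d-1) (c-1-j) (b+c+d) (d-1) := by
  set m' := a - b - 1 with hm'
  have hEB : ∀ l ∈ range c,
      (-1 : K) ^ ((c : ℤ) - 1 - l) *
          vv ^ (((a : ℤ) - b - l + d - 1) * ((l : ℤ) - d + 1)) *
          sgauss ((a : ℤ) - b - 2 + c - l) ((a : ℤ) - b - 1) *
          dgauss ((a : ℤ) + c + d) l * dgauss ((b : ℤ) + c + d) ((d : ℤ) - 1)
        = ((-1:K)^(c-1) * vv ^ ((((a:ℤ)-b)+d-1)*(1-(d:ℤ)) - ((m':ℕ):ℤ)*((c:ℤ)-1))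
            * dgauss ((b : ℤ) + c + d) ((d : ℤ) - 1))
          * ((Gp ((b+c+1) + (m'+1) + (d-1)) (-((b+c+1:ℕ):ℤ))).coeff l * Uf m' (c-1-l)) := by
    intro l hl
    have hlc : l ≤ c - 1 := by have := Finset.mem_range.1 hl; omega
    have h0 : ((c:ℤ) - 1 - l) = (((c-1:ℕ)):ℤ) - (l:ℤ) := by omega
    have h1 : ((a : ℤ) - b - 2 + c - l) = ((m' + (c-1-l) : ℕ) : ℤ) := by omega
    have h2 : ((a : ℤ) - b - 1) = ((m' : ℕ) : ℤ) := by omega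
    have h3 : ((a : ℤ) + c + d) = (((b+c+1) + (m'+1) + (d-1) : ℕ) : ℤ) := by omega
    rw [h0, h1, h2, h3]
    rw [sgauss_nat' (m' + (c-1-l)) m' (-(((a:ℤ)-b-1) * ((c:ℤ)-1-l))) (by omega)
        (by rw [show ((m' + (c-1-l) : ℕ) : ℤ) = ((a:ℤ)-b-1) + ((c:ℤ)-1-l) from by omega,
                show ((m' : ℕ) : ℤ) = (a:ℤ)-b-1 from by omega]; ring)]
    rw [dgauss_nat' ((b+c+1) + (m'+1) + (d-1)) l (-(2*(l:ℤ)*(((a:ℤ)+c+d) - l))) (by omega)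
        (by rw [show (((b+c+1) + (m'+1) + (d-1) : ℕ) : ℤ) = (a:ℤ)+c+d from by omega])]
    rw [coeff_Gp, neg_one_zpow_sub (c-1) l]
    have hUf : (Polynomial.aeval ((vv:K)^2)) (gb (m' + (c-1-l)) m') = Uf m' (c-1-l) := rfl
    rw [hUf]
    have hvv : vv ^ (((a : ℤ) - b - l + d - 1) * ((l : ℤ) - d + 1))
        * vv ^ (-(((a:ℤ)-b-1) * ((c:ℤ)-1-l))) * vv ^ (-(2*(l:ℤ)*(((a:ℤ)+c+d) - l)))
        = vv ^ ((((a:ℤ)-b)+d-1)*(1-(d:ℤ)) - ((m':ℕ):ℤ)*((c:ℤ)-1))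
          * vv ^ (2*(l:ℤ)*(-((b+c+1:ℕ):ℤ)) + (l:ℤ)*((l:ℤ)-1)) := by
      rw [vv_merge, vv_merge, vv_merge]
      congr 1
      rw [show ((m':ℕ):ℤ) = (a:ℤ)-b-1 from by omega]
      push_cast
      ring
    linear_combination ((-1:K)^(c-1) * (-1:K)^l * Uf m' (c-1-l)
      * (Polynomial.aeval ((vv:K)^2)) (gb ((b+c+1) + (m'+1) + (d-1)) l)
      * dgauss ((b : ℤ) + c + d) ((d : ℤ) - 1)) * hvv
  have hV := VdG m' (b+c+1) (d-1) (c-1)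
  rw [show c - 1 + 1 = c from by omega] at hV
  rw [Finset.sum_congr rfl hEB, ← Finset.mul_sum, hV, Finset.mul_sum]
  apply Finset.sum_congr rfl
  intro j hj
  have hjc : j ≤ c - 1 := by have := Finset.mem_range.1 hj; omega
  rw [coeff_Gp, coeff_Gp]
  have hMd : ((b : ℤ) + c + d) = (((b+c+d) : ℕ) : ℤ) := by omega
  have hd1 : ((d : ℤ) - 1) = (((d-1:ℕ)) : ℤ) := by omega
  rw [hMd, hd1, dgauss_nat' (b+c+d) (d-1) (-(2*((d:ℤ)-1)*(((b:ℤ)+c+d) - ((d:ℤ)-1)))) (by omega)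
      (by rw [show (((b+c+d) : ℕ) : ℤ) = (b:ℤ)+c+d from by omega,
              show (((d-1:ℕ)) : ℤ) = (d:ℤ)-1 from by omega])]
  have hsign : (-1:K)^(c-1) * ((-1:K)^j * (-1:K)^(c-1-j)) = 1 := by
    rw [← pow_add, show j + (c-1-j) = c-1 from by omega, ← pow_add]
    exact Even.neg_one_pow ⟨c-1, by omega⟩
  have hvv2 : vv ^ ((((a:ℤ)-b)+d-1)*(1-(d:ℤ)) - ((m':ℕ):ℤ)*((c:ℤ)-1))
      * vv ^ (-(2*((d:ℤ)-1)*(((b:ℤ)+c+d) - ((d:ℤ)-1))))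
      * vv ^ (2*(j:ℤ)*(-((b+c+1:ℕ):ℤ)) + (j:ℤ)*((j:ℤ)-1))
      * vv ^ (2*((c-1-j:ℕ):ℤ)*(((m':ℕ):ℤ)+1) + ((c-1-j:ℕ):ℤ)*(((c-1-j:ℕ):ℤ)-1))
      = vv ^ (alB a b c d j) := by
    rw [vv_merge, vv_merge, vv_merge]
    congr 1
    rw [show ((c-1-j:ℕ):ℤ) = (c:ℤ)-1-j from by omega, show ((m':ℕ):ℤ) = (a:ℤ)-b-1 from by omega]
    rw [alB]
    push_cast
    ring
  rw [phi3]
  linear_combination ((Polynomial.aeval ((vv:K)^2)) (gb (b+c+1) j)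
      * (Polynomial.aeval ((vv:K)^2)) (gb (d-1) (c-1-j))
      * (Polynomial.aeval ((vv:K)^2)) (gb (b+c+d) (d-1))) * (vv ^ (alB a b c d j)) * hsign
    + ((Polynomial.aeval ((vv:K)^2)) (gb (b+c+1) j)
      * (Polynomial.aeval ((vv:K)^2)) (gb (d-1) (c-1-j))
      * (Polynomial.aeval ((vv:K)^2)) (gb (b+c+d) (d-1))
      * ((-1:K)^(c-1) * (-1:K)^j * (-1:K)^(c-1-j))) * hvv2

lemma lowA (a b c d : ℕ) (hba : b < a) (hc : 1 ≤ c) (hd : 1 ≤ d) (j : ℕ) (hj : j ≤ c) :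
    lowC (vv ^ (alA a b c d j) * phi3 (b+c) j d (c-j) (b+c+d) d)
      (if c = d ∧ j = 0 then 1 else 0) := by
  by_cases hcase : c ≤ d + j
  · have hKey : alA a b c d j
        + 2*((j*(b+c-j) + (c-j)*(d-(c-j)) + d*((b+c+d)-d) : ℕ) : ℤ)
        = ((a:ℤ)-b)*(((c:ℤ)-j) - d - j) - ((d:ℤ)-((c:ℤ)-j))^2 - (j:ℤ)^2 := by
      have e1 : ((j*(b+c-j) + (c-j)*(d-(c-j)) + d*((b+c+d)-d) : ℕ) : ℤ)
          = (j:ℤ)*((b:ℤ)+c-j) + ((c:ℤ)-j)*((d:ℤ)-((c:ℤ)-j)) + (d:ℤ)*((b:ℤ)+c) := by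
        push_cast
        rw [show ((b+c-j:ℕ):ℤ) = (b:ℤ)+c-j from by omega,
            show ((d-(c-j):ℕ):ℤ) = (d:ℤ)-((c:ℤ)-j) from by omega,
            show ((c-j:ℕ):ℤ) = (c:ℤ)-j from by omega,
            show ((b+c+d-d:ℕ):ℤ) = (b:ℤ)+c from by omega]
      rw [e1, alA]
      ring
    have hm1 : (1:ℤ) ≤ (a:ℤ)-b := by omega
    have hid : ((c:ℤ)-j) ≤ d := by omega
    have hj0 : (0:ℤ) ≤ (j:ℤ) := by positivity
    have hprod : (0:ℤ) ≤ ((a:ℤ)-b-1) * ((d:ℤ) + j - ((c:ℤ)-j)) :=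
      mul_nonneg (by omega) (by omega)
    have hle : alA a b c d j
        + 2*((j*(b+c-j) + (c-j)*(d-(c-j)) + d*((b+c+d)-d) : ℕ) : ℤ) ≤ 0 := by
      rw [hKey]
      nlinarith [sq_nonneg ((d:ℤ)-((c:ℤ)-j)), sq_nonneg (j:ℤ)]
    have key := lowC_term (b+c) j d (c-j) (b+c+d) d (alA a b c d j)
      (by omega) (by omega) (by omega) hle
    have hval : (if alA a b c d j
        + 2*((j*(b+c-j) + (c-j)*(d-(c-j)) + d*((b+c+d)-d) : ℕ) : ℤ) = 0 then (1:ℤ) else 0)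
        = (if c = d ∧ j = 0 then 1 else 0) := by
      by_cases hcd : c = d ∧ j = 0
      · rw [if_pos hcd, if_pos]
        rw [hKey, hcd.2, hcd.1]
        push_cast
        ring
      · rw [if_neg hcd, if_neg]
        intro h0
        rw [hKey] at h0
        have hsum : ((d:ℤ)-((c:ℤ)-j)) + (j:ℤ) ≤ 0 := by
          nlinarith [sq_nonneg ((d:ℤ)-((c:ℤ)-j)), sq_nonneg (j:ℤ)]
        apply hcd
        constructor <;> omega
    rw [← hval]
    exact key
  · have hz : gb d (c-j) = 0 := gb_eq_zero (by omega)
    rw [if_neg (by omega)]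
    exact ⟨0, by simp, by simp [phi3, hz]⟩

lemma lowB (a b c d : ℕ) (hba : b < a) (hc : 1 ≤ c) (hd : 1 ≤ d) (j : ℕ) (hj : j ≤ c - 1) :
    lowC (vv ^ (alB a b c d j) * phi3 (b+c+1) j (d-1) (c-1-j) (b+c+d) (d-1))
      (if c = d ∧ j = 0 then 1 else 0) := by
  by_cases hcase : c ≤ d + j
  · have hKey : alB a b c d j
        + 2*((j*(b+c+1-j) + (c-1-j)*((d-1)-(c-1-j)) + (d-1)*((b+c+d)-(d-1)) : ℕ) : ℤ)
        = ((a:ℤ)-b)*(((c:ℤ)-j) - d - j) - ((d:ℤ)-((c:ℤ)-j))^2 - (j:ℤ)^2 := by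
      have e1 : ((j*(b+c+1-j) + (c-1-j)*((d-1)-(c-1-j)) + (d-1)*((b+c+d)-(d-1)) : ℕ) : ℤ)
          = (j:ℤ)*((b:ℤ)+c+1-j) + ((c:ℤ)-1-j)*((d:ℤ)-1-((c:ℤ)-1-j))
            + ((d:ℤ)-1)*((b:ℤ)+c+1) := by
        push_cast
        rw [show ((b+c+1-j:ℕ):ℤ) = (b:ℤ)+c+1-j from by omega,
            show (((d-1)-(c-1-j):ℕ):ℤ) = (d:ℤ)-1-((c:ℤ)-1-j) from by omega,
            show ((c-1-j:ℕ):ℤ) = (c:ℤ)-1-j from by omega,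
            show ((d-1:ℕ):ℤ) = (d:ℤ)-1 from by omega,
            show ((b+c+d-(d-1):ℕ):ℤ) = (b:ℤ)+c+1 from by omega]
      rw [e1, alB]
      ring
    have hm1 : (1:ℤ) ≤ (a:ℤ)-b := by omega
    have hid : ((c:ℤ)-j) ≤ d := by omega
    have hprod : (0:ℤ) ≤ ((a:ℤ)-b-1) * ((d:ℤ) + j - ((c:ℤ)-j)) :=
      mul_nonneg (by omega) (by omega)
    have hle : alB a b c d j
        + 2*((j*(b+c+1-j) + (c-1-j)*((d-1)-(c-1-j)) + (d-1)*((b+c+d)-(d-1)) : ℕ) : ℤ) ≤ 0 := by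
      rw [hKey]
      nlinarith [sq_nonneg ((d:ℤ)-((c:ℤ)-j)), sq_nonneg (j:ℤ)]
    have key := lowC_term (b+c+1) j (d-1) (c-1-j) (b+c+d) (d-1) (alB a b c d j)
      (by omega) (by omega) (by omega) hle
    have hval : (if alB a b c d j
        + 2*((j*(b+c+1-j) + (c-1-j)*((d-1)-(c-1-j)) + (d-1)*((b+c+d)-(d-1)) : ℕ) : ℤ) = 0
          then (1:ℤ) else 0)
        = (if c = d ∧ j = 0 then 1 else 0) := by
      by_cases hcd : c = d ∧ j = 0
      · rw [if_pos hcd, if_pos]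
        rw [hKey, hcd.2, hcd.1]
        push_cast
        ring
      · rw [if_neg hcd, if_neg]
        intro h0
        rw [hKey] at h0
        have hsum : ((d:ℤ)-((c:ℤ)-j)) + (j:ℤ) ≤ 0 := by
          nlinarith [sq_nonneg ((d:ℤ)-((c:ℤ)-j)), sq_nonneg (j:ℤ)]
        apply hcd
        constructor <;> omega
    rw [← hval]
    exact key
  · have hz : gb (d-1) (c-1-j) = 0 := gb_eq_zero (by omega)
    rw [if_neg (by omega)]
    exact ⟨0, by simp, by simp [phi3, hz]⟩

lemma main_half (a b c d : ℕ) (hba : b < a) (hc : 1 ≤ c) (hd : 1 ≤ d) :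
    inVinv
      ((∑ k ∈ Finset.range (c + 1),
          (-1 : RatFunc ℚ) ^ ((c : ℤ) - k) *
            vv ^ (((a : ℤ) - b - k + d) * ((k : ℤ) - d)) *
            sgauss ((a : ℤ) - b - 1 + c - k) ((a : ℤ) - b - 1) *
            dgauss ((a : ℤ) + c + d) k * dgauss ((b : ℤ) + c + d) d) -
        ∑ l ∈ Finset.range c,
          (-1 : RatFunc ℚ) ^ ((c : ℤ) - 1 - l) *
            vv ^ (((a : ℤ) - b - l + d - 1) * ((l : ℤ) - d + 1)) *
            sgauss ((a : ℤ) - b - 2 + c - l) ((a : ℤ) - b - 1) *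
            dgauss ((a : ℤ) + c + d) l * dgauss ((b : ℤ) + c + d) ((d : ℤ) - 1)) := by
  rw [sum1_eq a b c d hba hc hd, sum2_eq a b c d hba hc hd]
  have hA : lowC (∑ j ∈ range (c+1), vv ^ (alA a b c d j) * phi3 (b+c) j d (c-j) (b+c+d) d)
      (∑ j ∈ range (c+1), if c = d ∧ j = 0 then 1 else 0) := by
    apply lowC_sum
    intro j hj
    exact lowA a b c d hba hc hd j (by have := Finset.mem_range.1 hj; omega)
  have hB : lowC (∑ j ∈ range c, vv ^ (alB a b c d j) * phi3 (b+c+1) j (d-1) (c-1-j) (b+c+d) (d-1))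
      (∑ j ∈ range c, if c = d ∧ j = 0 then 1 else 0) := by
    apply lowC_sum
    intro j hj
    exact lowB a b c d hba hc hd j (by have := Finset.mem_range.1 hj; omega)
  have hsub := lowC_sub hA hB
  have hzero : ((∑ j ∈ range (c+1), if c = d ∧ j = 0 then (1:ℤ) else 0)
      - (∑ j ∈ range c, if c = d ∧ j = 0 then (1:ℤ) else 0)) = 0 := by
    by_cases hcd : c = d
    · have e1 : (∑ j ∈ range (c+1), if c = d ∧ j = 0 then (1:ℤ) else 0) = 1 := by
        rw [Finset.sum_eq_single 0]
        · simp [hcd]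
        · intro j _ hne
          rw [if_neg (by tauto)]
        · intro h
          simp at h
      have e2 : (∑ j ∈ range c, if c = d ∧ j = 0 then (1:ℤ) else 0) = 1 := by
        rw [Finset.sum_eq_single 0]
        · simp [hcd]
        · intro j _ hne
          rw [if_neg (by tauto)]
        · intro h
          simp at h
          omega
      rw [e1, e2]
      ring
    · have e1 : (∑ j ∈ range (c+1), if c = d ∧ j = 0 then (1:ℤ) else 0) = 0 := by
        apply Finset.sum_eq_zero
        intro j _
        rw [if_neg (by tauto)]
      have e2 : (∑ j ∈ range c, if c = d ∧ j = 0 then (1:ℤ) else 0) = 0 := by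
        apply Finset.sum_eq_zero
        intro j _
        rw [if_neg (by tauto)]
      rw [e1, e2]
      ring
  rw [hzero] at hsub
  exact hsub

end CZZ

theorem coefficient_of_zero_zero (a b c d : ℕ) (hc : 1 ≤ c) (hd : 1 ≤ d) :
    (b < a →
      inVinv
        ((∑ k ∈ Finset.range (c + 1),
            (-1 : RatFunc ℚ) ^ ((c : ℤ) - k) *
              vv ^ (((a : ℤ) - b - k + d) * ((k : ℤ) - d)) *
              sgauss ((a : ℤ) - b - 1 + c - k) ((a : ℤ) - b - 1) *
              dgauss ((a : ℤ) + c + d) k * dgauss ((b : ℤ) + c + d) d) -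
          ∑ l ∈ Finset.range c,
            (-1 : RatFunc ℚ) ^ ((c : ℤ) - 1 - l) *
              vv ^ (((a : ℤ) - b - l + d - 1) * ((l : ℤ) - d + 1)) *
              sgauss ((a : ℤ) - b - 2 + c - l) ((a : ℤ) - b - 1) *
              dgauss ((a : ℤ) + c + d) l * dgauss ((b : ℤ) + c + d) ((d : ℤ) - 1))) ∧
    (a < b →
      inVinv
        ((∑ k ∈ Finset.range (d + 1),
            (-1 : RatFunc ℚ) ^ ((d : ℤ) - k) *
              vv ^ (((b : ℤ) - a - k + c) * ((k : ℤ) - c)) *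
              sgauss ((b : ℤ) - a - 1 + d - k) ((b : ℤ) - a - 1) *
              dgauss ((a : ℤ) + c + d) c * dgauss ((b : ℤ) + c + d) k) -
          ∑ l ∈ Finset.range d,
            (-1 : RatFunc ℚ) ^ ((d : ℤ) - 1 - l) *
              vv ^ (((b : ℤ) - a - l + c - 1) * ((l : ℤ) - c + 1)) *
              sgauss ((b : ℤ) - a - 2 + d - l) ((b : ℤ) - a - 1) *
              dgauss ((a : ℤ) + c + d) ((c : ℤ) - 1) * dgauss ((b : ℤ) + c + d) l)) := by
  constructor
  · intro h
    exact CZZ.main_half a b c d h hc hd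
  · intro h
    have H := CZZ.main_half b a d c h hd hc
    rw [show ((b:ℤ) + (d:ℤ) + (c:ℤ)) = ((b:ℤ) + (c:ℤ) + (d:ℤ)) from by ring,
        show ((a:ℤ) + (d:ℤ) + (c:ℤ)) = ((a:ℤ) + (c:ℤ) + (d:ℤ)) from by ring] at H
    have he1 : (∑ k ∈ Finset.range (d + 1),
            (-1 : RatFunc ℚ) ^ ((d : ℤ) - k) *
              vv ^ (((b : ℤ) - a - k + c) * ((k : ℤ) - c)) *
              sgauss ((b : ℤ) - a - 1 + d - k) ((b : ℤ) - a - 1) *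
              dgauss ((a : ℤ) + c + d) c * dgauss ((b : ℤ) + c + d) k)
        = (∑ k ∈ Finset.range (d + 1),
            (-1 : RatFunc ℚ) ^ ((d : ℤ) - k) *
              vv ^ (((b : ℤ) - a - k + c) * ((k : ℤ) - c)) *
              sgauss ((b : ℤ) - a - 1 + d - k) ((b : ℤ) - a - 1) *
              dgauss ((b : ℤ) + c + d) k * dgauss ((a : ℤ) + c + d) c) :=
      Finset.sum_congr rfl (fun k _ => by ring)
    have he2 : (∑ l ∈ Finset.range d,
            (-1 : RatFunc ℚ) ^ ((d : ℤ) - 1 - l) *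
              vv ^ (((b : ℤ) - a - l + c - 1) * ((l : ℤ) - c + 1)) *
              sgauss ((b : ℤ) - a - 2 + d - l) ((b : ℤ) - a - 1) *
              dgauss ((a : ℤ) + c + d) ((c : ℤ) - 1) * dgauss ((b : ℤ) + c + d) l)
        = (∑ l ∈ Finset.range d,
            (-1 : RatFunc ℚ) ^ ((d : ℤ) - 1 - l) *
              vv ^ (((b : ℤ) - a - l + c - 1) * ((l : ℤ) - c + 1)) *
              sgauss ((b : ℤ) - a - 2 + d - l) ((b : ℤ) - a - 1) *
              dgauss ((b : ℤ) + c + d) l * dgauss ((a : ℤ) + c + d) ((c : ℤ) - 1)) :=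
      Finset.sum_congr rfl (fun l _ => by ring)
    rw [he1, he2]
    exact H
end
end

section
/- Let a, b, c, d ∈ ℕ with c + d ≥ 1 and ab + cd ≥ 1, and let A = A(a,b,c,d) ∈ Θ⁺_Δ(2). For 0 ≤ k1 ≤ c and 0 ≤ k2 ≤ d let A_{(k1,k2)} := A(a+c+d−k1−k2, b+c+d−k1−k2, k1, k2), i.e. the matrix in Θ⁺_Δ(2) whose only nonzero entries in rows 1 and 2 are a+c+d−k1−k2 at (1,2), k1 at (1,3), b+c+d−k1−k2 at (2,3) and k2 at (2,4). Then: (i) the set of B ∈ Θ⁺_Δ(2) with B ⪯ A and with the same dimension vector as A is exactly { A_{(k1,k2)} : 0 ≤ k1 ≤ c, 0 ≤ k2 ≤ d }; and (ii) for 0 ≤ t1, k1 ≤ c and 0 ≤ t2, k2 ≤ d, A_{(t1,t2)} ⪯ A_{(k1,k2)} if and only if t1 ≤ k1 and t2 ≤ k2. -/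
/-- `σ_{i,j}(B) = Σ_{s ≤ i, t ≥ j} b_{s,t}` (a finite sum). -/
noncomputable def sigmaIJ (B : ThetaPlus 2) (i j : ℤ) : ℕ :=
  ∑ᶠ p : ℤ × ℤ, (if p.1 ≤ i ∧ j ≤ p.2 then B.a p.1 p.2 else 0)

/-- The order relation `B ⪯ A` on `Θ⁺_Δ(2)`. -/
def Prec (B A : ThetaPlus 2) : Prop := ∀ i j : ℤ, i < j → sigmaIJ B i j ≤ sigmaIJ A i j

/-- The `v`-th component of the dimension vector of `B ∈ Θ⁺_Δ(2)`, `v ∈ {1,2}`. -/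
noncomputable def dimComp (B : ThetaPlus 2) (v : ℤ) : ℕ :=
  ∑ i ∈ ({1, 2} : Finset ℤ), ∑ᶠ j : ℤ,
    (if i < j then B.a i j * ((Finset.Icc i (j - 1)).filter fun s => s % 2 = v % 2).card
     else 0)

/-- The entry function of the matrix `A(a,b,c,d)` in `Θ⁺_Δ(2)`, whose only nonzero
entries in rows 1 and 2 are `a` at `(1,2)`, `c` at `(1,3)`, `b` at `(2,3)` and `d`
at `(2,4)`. -/
def fourEntryFun (a b c d : ℕ) : ℤ → ℤ → ℕ := fun i j =>
  if i % 2 = 1 ∧ j = i + 1 then a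
  else if i % 2 = 1 ∧ j = i + 2 then c
  else if i % 2 = 0 ∧ j = i + 1 then b
  else if i % 2 = 0 ∧ j = i + 2 then d
  else 0

/-- The matrix `A(a,b,c,d) ∈ Θ⁺_Δ(2)`. -/
def fourEntry (a b c d : ℕ) : ThetaPlus 2 where
  a := fourEntryFun a b c d
  periodic := by
    intro i j
    simp only [fourEntryFun, Nat.cast_ofNat]
    split_ifs <;> omega
  upper := by
    intro i j hij
    simp only [fourEntryFun]
    split_ifs <;> omega
  rowFinite := by
    intro i
    apply Set.Finite.subset (Set.finite_Icc (i + 1) (i + 2))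
    intro j hj
    simp only [Function.mem_support, fourEntryFun] at hj
    simp only [Set.mem_Icc]
    split_ifs at hj <;> omega

/-!
Since `σ_{s,t}(A) = 0` once `t ≥ s + 3`, every `B ⪯ A` vanishes off the first two
superdiagonals, so by periodicity `B = A(a', b', c', d')`. Between two such matrices `⪯` reduces
to the four inequalities read off at `σ_{1,2}, σ_{2,3}, σ_{1,3}, σ_{2,4}`, namely
`a' + c' + d' ≤ a + c + d`, `b' + c' + d' ≤ b + c + d`, `c' ≤ c`, `d' ≤ d`, while the dimension
vector of `A(a', b', c', d')` is `(a' + c' + d', b' + c' + d')`.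
-/

namespace ThetaPlus

variable {n : ℕ} (B : ThetaPlus n)

theorem ext {C : ThetaPlus n} (h : B.a = C.a) : B = C := by
  cases B; cases C; cases h; rfl

theorem a_add_mul (i j k : ℤ) : B.a (i + n * k) (j + n * k) = B.a i j := by
  induction k using Int.induction_on with
  | zero => simp
  | succ k ih =>
    rw [← ih, B.periodic (i + n * k) (j + n * k)]
    congr 1 <;> ring
  | pred k ih =>
    rw [← ih, B.periodic (i + n * (-k - 1)) (j + n * (-k - 1))]
    congr 1 <;> ring

theorem a_eq_of_modEq {i i' : ℤ} (h : i ≡ i' [ZMOD n]) (j : ℤ) :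
    B.a i j = B.a i' (j + i' - i) := by
  obtain ⟨k, hk⟩ := Int.modEq_iff_dvd.mp h
  rw [← B.a_add_mul i j k]
  congr 1 <;> omega

theorem exists_lt_add_of_a_ne_zero (hn : 0 < n) :
    ∃ M : ℤ, ∀ s t : ℤ, B.a s t ≠ 0 → t < s + M := by
  have hrows : (⋃ r ∈ Set.Ico (0 : ℤ) n, Function.support (B.a r)).Finite :=
    (Set.finite_Ico _ _).biUnion fun r _ => B.rowFinite r
  obtain ⟨u, hu⟩ := hrows.bddAbove
  refine ⟨u + 1, fun s t hst => ?_⟩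
  have hmod : 0 ≤ s % n ∧ s % n < n :=
    ⟨Int.emod_nonneg s (by omega), Int.emod_lt_of_pos s (by omega)⟩
  rw [B.a_eq_of_modEq (Int.mod_modEq s n).symm] at hst
  have : t + s % n - s ≤ u := hu (Set.mem_biUnion (Set.mem_Ico.mpr hmod) hst)
  omega

end ThetaPlus

theorem sigmaIJ_support_finite (B : ThetaPlus 2) (i j : ℤ) :
    (Function.support fun p : ℤ × ℤ =>
      if p.1 ≤ i ∧ j ≤ p.2 then B.a p.1 p.2 else 0).Finite := by
  obtain ⟨M, hM⟩ := B.exists_lt_add_of_a_ne_zero two_pos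
  refine ((Set.finite_Icc (j - M) i).prod (Set.finite_Icc j (i + M))).subset ?_
  rintro ⟨s, t⟩ hst
  simp only [Function.mem_support, ne_eq, ite_eq_right_iff, Classical.not_imp] at hst
  have := hM s t hst.2
  simp only [Set.mem_prod, Set.mem_Icc]
  omega

theorem a_le_sigmaIJ (B : ThetaPlus 2) (i j : ℤ) : B.a i j ≤ sigmaIJ B i j := by
  simpa [sigmaIJ] using
    single_le_finsum (i, j) (sigmaIJ_support_finite B i j) fun _ => Nat.zero_le _

theorem fourEntry_a (a b c d : ℕ) (i j : ℤ) :
    (fourEntry a b c d).a i j =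
      if i % 2 = 1 then (if j = i + 1 then a else if j = i + 2 then c else 0)
      else (if j = i + 1 then b else if j = i + 2 then d else 0) := by
  simp only [fourEntry, fourEntryFun]
  split_ifs <;> omega

theorem sigmaIJ_fourEntry (a b c d : ℕ) {i j : ℤ} (h : i < j) :
    sigmaIJ (fourEntry a b c d) i j =
      if i % 2 = 1 then (if j = i + 1 then a + c + d else if j = i + 2 then c else 0)
      else (if j = i + 1 then b + c + d else if j = i + 2 then d else 0) := by
  have hsupp : Function.support
      (fun p : ℤ × ℤ => if p.1 ≤ i ∧ j ≤ p.2 then (fourEntry a b c d).a p.1 p.2 else 0)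
      ⊆ (({(i - 1, i + 1), (i, i + 1), (i, i + 2)} : Finset (ℤ × ℤ)) : Set (ℤ × ℤ)) := by
    rintro ⟨s, t⟩ hst
    simp only [Function.mem_support, ne_eq, ite_eq_right_iff, Classical.not_imp,
      fourEntry_a] at hst
    simp only [Finset.coe_insert, Finset.coe_singleton, Set.mem_insert_iff,
      Set.mem_singleton_iff, Prod.ext_iff]
    split_ifs at hst <;> omega
  rw [sigmaIJ, finsum_eq_sum_of_support_subset _ hsupp,
    Finset.sum_insert (by simp only [Finset.mem_insert, Finset.mem_singleton, Prod.ext_iff]; omega),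
    Finset.sum_pair (by simp only [ne_eq, Prod.ext_iff]; omega)]
  simp only [fourEntry_a]
  split_ifs <;> omega

theorem prec_fourEntry_iff {a b c d a' b' c' d' : ℕ} :
    Prec (fourEntry a' b' c' d') (fourEntry a b c d) ↔
      a' + c' + d' ≤ a + c + d ∧ b' + c' + d' ≤ b + c + d ∧ c' ≤ c ∧ d' ≤ d := by
  constructor
  · intro h
    have h12 := h 1 2 (by norm_num)
    have h23 := h 2 3 (by norm_num)
    have h13 := h 1 3 (by norm_num)
    have h24 := h 2 4 (by norm_num)
    simp only [sigmaIJ_fourEntry _ _ _ _ (by norm_num : (1 : ℤ) < 2),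
      sigmaIJ_fourEntry _ _ _ _ (by norm_num : (2 : ℤ) < 3),
      sigmaIJ_fourEntry _ _ _ _ (by norm_num : (1 : ℤ) < 3),
      sigmaIJ_fourEntry _ _ _ _ (by norm_num : (2 : ℤ) < 4)] at h12 h23 h13 h24
    norm_num at h12 h23 h13 h24
    exact ⟨h12, h23, h13, h24⟩
  · rintro ⟨h12, h23, h13, h24⟩ i j hij
    rw [sigmaIJ_fourEntry _ _ _ _ hij, sigmaIJ_fourEntry _ _ _ _ hij]
    split_ifs <;> omega

theorem dimComp_fourEntry (a b c d : ℕ) (v : ℤ) :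
    dimComp (fourEntry a b c d) v = (if v % 2 = 1 then a else b) + c + d := by
  have hsupp : ∀ i : ℤ, Function.support (fun j : ℤ =>
      if i < j then (fourEntry a b c d).a i j *
        ((Finset.Icc i (j - 1)).filter fun s => s % 2 = v % 2).card else 0)
      ⊆ (({i + 1, i + 2} : Finset ℤ) : Set ℤ) := by
    intro i j hj
    simp only [Function.mem_support, ne_eq, ite_eq_right_iff, Classical.not_imp,
      fourEntry_a] at hj
    simp only [Finset.coe_insert, Finset.coe_singleton, Set.mem_insert_iff,
      Set.mem_singleton_iff]
    split_ifs at hj <;> simp_all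
  rw [dimComp, Finset.sum_pair (by norm_num), finsum_eq_sum_of_support_subset _ (hsupp 1),
    finsum_eq_sum_of_support_subset _ (hsupp 2), Finset.sum_pair (by norm_num),
    Finset.sum_pair (by norm_num)]
  have h11 : Finset.Icc (1 : ℤ) 1 = {1} := Finset.Icc_self 1
  have h22 : Finset.Icc (2 : ℤ) 2 = {2} := Finset.Icc_self 2
  have h12 : Finset.Icc (1 : ℤ) 2 = {1, 2} := by ext; simp; omega
  have h23 : Finset.Icc (2 : ℤ) 3 = {2, 3} := by ext; simp; omega
  norm_num [fourEntry_a, h11, h22, h12, h23, Finset.filter_insert, Finset.filter_singleton]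
  rcases Int.emod_two_eq v with hv | hv
  · simp [hv]
    ring
  · simp [hv]

theorem a_eq_zero_of_prec_fourEntry {B : ThetaPlus 2} {a b c d : ℕ}
    (h : Prec B (fourEntry a b c d)) {s t : ℤ} (hst : s + 3 ≤ t) : B.a s t = 0 := by
  have := (a_le_sigmaIJ B s t).trans (h s t (by omega))
  rw [sigmaIJ_fourEntry _ _ _ _ (by omega)] at this
  split_ifs at this <;> omega

theorem eq_fourEntry_of_a_eq_zero (B : ThetaPlus 2)
    (hB : ∀ s t : ℤ, s + 3 ≤ t → B.a s t = 0) :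
    B = fourEntry (B.a 1 2) (B.a 2 3) (B.a 1 3) (B.a 2 4) := by
  refine B.ext (funext₂ fun i j => ?_)
  have hrow : B.a i j = if i % 2 = 1 then B.a 1 (j - i + 1) else B.a 2 (j - i + 2) := by
    split_ifs with hi
    · rw [B.a_eq_of_modEq (show i ≡ 1 [ZMOD 2] from hi)]
      congr 1; ring
    · rw [B.a_eq_of_modEq (show i ≡ 2 [ZMOD 2] by unfold Int.ModEq; omega)]
      congr 1; ring
  rw [hrow, fourEntry_a]
  rcases (by omega : j ≤ i ∨ j = i + 1 ∨ j = i + 2 ∨ i + 3 ≤ j) with hj | hj | hj | hj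
  · rw [B.upper 1 _ (by omega), B.upper 2 _ (by omega)]
    split_ifs <;> omega
  · rw [show j - i + 1 = 2 by omega, show j - i + 2 = 3 by omega]
    split_ifs <;> omega
  · rw [show j - i + 1 = 3 by omega, show j - i + 2 = 4 by omega]
    split_ifs <;> omega
  · rw [hB 1 _ (by omega), hB 2 _ (by omega)]
    split_ifs <;> omega

theorem poset_ideal_structure_general (a b c d : ℕ) :
    ({B : ThetaPlus 2 | Prec B (fourEntry a b c d) ∧
        dimComp B 1 = dimComp (fourEntry a b c d) 1 ∧
        dimComp B 2 = dimComp (fourEntry a b c d) 2} =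
      {B : ThetaPlus 2 | ∃ k1 k2 : ℕ, k1 ≤ c ∧ k2 ≤ d ∧
        B = fourEntry (a + c + d - k1 - k2) (b + c + d - k1 - k2) k1 k2}) ∧
    (∀ t1 k1 t2 k2 : ℕ, t1 ≤ c → k1 ≤ c → t2 ≤ d → k2 ≤ d →
      (Prec (fourEntry (a + c + d - t1 - t2) (b + c + d - t1 - t2) t1 t2)
          (fourEntry (a + c + d - k1 - k2) (b + c + d - k1 - k2) k1 k2) ↔
        t1 ≤ k1 ∧ t2 ≤ k2)) := by
  refine ⟨Set.ext fun B => ⟨?_, ?_⟩, fun t1 k1 t2 k2 _ _ _ _ => ?_⟩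
  · rintro ⟨hprec, hdim1, hdim2⟩
    have hB := eq_fourEntry_of_a_eq_zero B fun s t => a_eq_zero_of_prec_fourEntry hprec
    rw [hB] at hprec hdim1 hdim2 ⊢
    simp only [prec_fourEntry_iff, dimComp_fourEntry] at hprec hdim1 hdim2
    refine ⟨B.a 1 3, B.a 2 4, hprec.2.2.1, hprec.2.2.2, ?_⟩
    norm_num at hdim1 hdim2
    congr 1 <;> omega
  · rintro ⟨k1, k2, hk1, hk2, rfl⟩
    refine ⟨prec_fourEntry_iff.mpr (by omega), ?_, ?_⟩ <;>
      norm_num [dimComp_fourEntry] <;> omega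
  · rw [prec_fourEntry_iff]
    omega

theorem poset_ideal_structure (a b c d : ℕ) (h1 : 1 ≤ c + d) (h2 : 1 ≤ a * b + c * d) :
    ({B : ThetaPlus 2 | Prec B (fourEntry a b c d) ∧
        dimComp B 1 = dimComp (fourEntry a b c d) 1 ∧
        dimComp B 2 = dimComp (fourEntry a b c d) 2} =
      {B : ThetaPlus 2 | ∃ k1 k2 : ℕ, k1 ≤ c ∧ k2 ≤ d ∧
        B = fourEntry (a + c + d - k1 - k2) (b + c + d - k1 - k2) k1 k2}) ∧
    (∀ t1 k1 t2 k2 : ℕ, t1 ≤ c → k1 ≤ c → t2 ≤ d → k2 ≤ d →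
      (Prec (fourEntry (a + c + d - t1 - t2) (b + c + d - t1 - t2) t1 t2)
          (fourEntry (a + c + d - k1 - k2) (b + c + d - k1 - k2) k1 k2) ↔
        t1 ≤ k1 ∧ t2 ≤ k2)) :=
  poset_ideal_structure_general a b c d
end
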